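/- arXiv:2511.18041 — 7 statements merged into one kernel-verified Lean document; each statement's English description precedes it below -/
import Mathlib

section
/- Let f ∈ HL₀(B_X, Y) and define the transpose f^t : Y* → HL₀(B_X) by f^t(y*) = y* ∘ f. Then f^t is a bounded linear operator with ‖f^t‖ = L(f). -/
open Metric Set Filter Topology

noncomputable section

universe u

def LipImage {X Y : Type*} [NormedAddCommGroup X] [NormedSpace ℂ X]
    [NormedAddCommGroup Y] [NormedSpace ℂ Y] (f : X → Y) : Set Y :=
  {v | ∃ x ∈ ball (0 : X) 1, ∃ y ∈ ball (0 : X) 1, x ≠ y ∧ v = ‖x - y‖⁻¹ • (f x - f y)}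

def MemHL {X Y : Type*} [NormedAddCommGroup X] [NormedSpace ℂ X]
    [NormedAddCommGroup Y] [NormedSpace ℂ Y] (f : X → Y) : Prop :=
  f 0 = 0 ∧ DifferentiableOn ℂ f (ball (0 : X) 1) ∧
    ∃ C : ℝ, ∀ x ∈ ball (0 : X) 1, ∀ y ∈ ball (0 : X) 1, ‖f x - f y‖ ≤ C * ‖x - y‖

def LipNorm {X Y : Type*} [NormedAddCommGroup X] [NormedSpace ℂ X]
    [NormedAddCommGroup Y] [NormedSpace ℂ Y] (f : X → Y) : ℝ :=
  sSup ((fun p : X × X => ‖f p.1 - f p.2‖ / ‖p.1 - p.2‖) ''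
    {p : X × X | p.1 ∈ ball (0 : X) 1 ∧ p.2 ∈ ball (0 : X) 1 ∧ p.1 ≠ p.2})

/-! Composing with a functional `φ` multiplies difference quotients by at most `‖φ‖`, so
`L(φ ∘ f) ≤ ‖φ‖ L(f)`. Conversely, Hahn–Banach gives for `f x ≠ f y` a functional of norm at
most one with `φ (f x - f y) = ‖f x - f y‖`, so every difference quotient of `f` is one of
some `φ ∘ f` with `‖φ‖ ≤ 1`. -/

open scoped NNReal

section LipNorm

variable {X Y Z : Type*} [NormedAddCommGroup X] [NormedSpace ℂ X]
    [NormedAddCommGroup Y] [NormedSpace ℂ Y] [NormedAddCommGroup Z] [NormedSpace ℂ Z]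
    {f : X → Y}

lemma lipNorm_nonneg (f : X → Y) : 0 ≤ LipNorm f :=
  Real.sSup_nonneg <| by rintro _ ⟨p, -, rfl⟩; positivity

lemma lipNorm_le {M : ℝ} (hM : 0 ≤ M)
    (h : ∀ x ∈ ball (0 : X) 1, ∀ y ∈ ball (0 : X) 1, x ≠ y → ‖f x - f y‖ / ‖x - y‖ ≤ M) :
    LipNorm f ≤ M :=
  Real.sSup_le (by rintro _ ⟨p, ⟨hp₁, hp₂, hne⟩, rfl⟩; exact h _ hp₁ _ hp₂ hne) hM

lemma LipschitzOnWith.div_le_lipNorm {K : ℝ≥0} (hf : LipschitzOnWith K f (ball 0 1)) {x y : X}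
    (hx : x ∈ ball (0 : X) 1) (hy : y ∈ ball (0 : X) 1) (hne : x ≠ y) :
    ‖f x - f y‖ / ‖x - y‖ ≤ LipNorm f := by
  refine le_csSup ⟨K, ?_⟩ ⟨(x, y), ⟨hx, hy, hne⟩, rfl⟩
  rintro _ ⟨p, ⟨hp₁, hp₂, -⟩, rfl⟩
  exact div_le_of_le_mul₀ (norm_nonneg _) K.coe_nonneg
    (lipschitzOnWith_iff_norm_sub_le.1 hf hp₁ hp₂)

lemma LipschitzWith.lipNorm_comp_le {g : Y → Z} {K K' : ℝ≥0} (hg : LipschitzWith K g)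
    (hf : LipschitzOnWith K' f (ball 0 1)) :
    LipNorm (fun x => g (f x)) ≤ K * LipNorm f :=
  lipNorm_le (mul_nonneg K.coe_nonneg (lipNorm_nonneg f)) fun x hx y hy hne => calc
    ‖g (f x) - g (f y)‖ / ‖x - y‖ ≤ K * ‖f x - f y‖ / ‖x - y‖ := by
      gcongr; exact hg.norm_sub_le _ _
    _ = K * (‖f x - f y‖ / ‖x - y‖) := mul_div_assoc ..
    _ ≤ K * LipNorm f := by gcongr; exact hf.div_le_lipNorm hx hy hne

lemma LipschitzOnWith.exists_norm_le_one_div_le_lipNorm_comp {K : ℝ≥0}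
    (hf : LipschitzOnWith K f (ball 0 1)) {x y : X}
    (hx : x ∈ ball (0 : X) 1) (hy : y ∈ ball (0 : X) 1) (hne : x ≠ y) :
    ∃ φ : Y →L[ℂ] ℂ, ‖φ‖ ≤ 1 ∧ ‖f x - f y‖ / ‖x - y‖ ≤ LipNorm (fun x => φ (f x)) := by
  obtain ⟨φ, hφ, hφxy⟩ := exists_dual_vector'' ℂ (f x - f y)
  have hnorm : ‖φ (f x) - φ (f y)‖ = ‖f x - f y‖ := by
    rw [← map_sub, hφxy, RCLike.norm_ofReal, abs_norm]
  refine ⟨φ, hφ, ?_⟩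
  rw [← hnorm]
  exact (φ.lipschitz.comp_lipschitzOnWith hf).div_le_lipNorm hx hy hne

lemma MemHL.exists_lipschitzOnWith (hf : MemHL f) : ∃ K, LipschitzOnWith K f (ball 0 1) := by
  obtain ⟨-, -, C, hC⟩ := hf
  exact ⟨_, LipschitzOnWith.of_dist_le' (by simpa only [dist_eq_norm] using hC)⟩

lemma MemHL.clm_comp (hf : MemHL f) (φ : Y →L[ℂ] Z) : MemHL (fun x => φ (f x)) := by
  obtain ⟨K, hK⟩ := hf.exists_lipschitzOnWith
  obtain ⟨hf₀, hfd, -⟩ := hf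
  refine ⟨by simp only [hf₀, map_zero], φ.differentiable.comp_differentiableOn hfd, ‖φ‖₊ * K,
    fun x hx y hy => ?_⟩
  exact lipschitzOnWith_iff_norm_sub_le.1 (φ.lipschitz.comp_lipschitzOnWith hK) hx hy

end LipNorm

theorem transpose_bounded_norm_eq_general {X Y : Type*}
    [NormedAddCommGroup X] [NormedSpace ℂ X]
    [NormedAddCommGroup Y] [NormedSpace ℂ Y]
    (f : X → Y) (hf : MemHL f) :
    (∀ φ : Y →L[ℂ] ℂ, MemHL (fun x => φ (f x))) ∧
    (∀ φ : Y →L[ℂ] ℂ, LipNorm (fun x => φ (f x)) ≤ ‖φ‖ * LipNorm f) ∧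
    sSup {r : ℝ | ∃ φ : Y →L[ℂ] ℂ, ‖φ‖ ≤ 1 ∧ r = LipNorm (fun x => φ (f x))}
      = LipNorm f := by
  obtain ⟨K, hK⟩ := hf.exists_lipschitzOnWith
  have hcomp_le (φ : Y →L[ℂ] ℂ) : LipNorm (fun x => φ (f x)) ≤ ‖φ‖ * LipNorm f :=
    φ.lipschitz.lipNorm_comp_le hK
  have hunit_le : ∀ r ∈ {r : ℝ | ∃ φ : Y →L[ℂ] ℂ, ‖φ‖ ≤ 1 ∧ r = LipNorm (fun x => φ (f x))},
      r ≤ LipNorm f := by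
    rintro _ ⟨φ, hφ, rfl⟩
    exact (hcomp_le φ).trans (mul_le_of_le_one_left (lipNorm_nonneg f) hφ)
  refine ⟨hf.clm_comp, hcomp_le, le_antisymm (Real.sSup_le hunit_le (lipNorm_nonneg f)) ?_⟩
  refine lipNorm_le (Real.sSup_nonneg (by rintro _ ⟨φ, -, rfl⟩; exact lipNorm_nonneg _))
    fun x hx y hy hne => ?_
  obtain ⟨φ, hφ, hxy⟩ := hK.exists_norm_le_one_div_le_lipNorm_comp hx hy hne
  exact hxy.trans (le_csSup ⟨_, hunit_le⟩ ⟨φ, hφ, rfl⟩)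

/-- the transpose f^t : Y* → HL₀(B_X), y* ↦ y* ∘ f, is a well-defined
bounded linear operator whose operator norm equals L(f).  (Linearity of y* ↦ y* ∘ f is
definitional; boundedness and the value of the operator norm are stated explicitly:
the operator norm is the supremum of L(y* ∘ f) over the closed unit ball of Y*.) -/
theorem transpose_bounded_norm_eq {X Y : Type*}
    [NormedAddCommGroup X] [NormedSpace ℂ X] [CompleteSpace X]
    [NormedAddCommGroup Y] [NormedSpace ℂ Y] [CompleteSpace Y]
    (f : X → Y) (hf : MemHL f) :
    (∀ φ : Y →L[ℂ] ℂ, MemHL (fun x => φ (f x))) ∧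
    (∀ φ : Y →L[ℂ] ℂ, LipNorm (fun x => φ (f x)) ≤ ‖φ‖ * LipNorm f) ∧
    sSup {r : ℝ | ∃ φ : Y →L[ℂ] ℂ, ‖φ‖ ≤ 1 ∧ r = LipNorm (fun x => φ (f x))}
      = LipNorm f :=
  transpose_bounded_norm_eq_general f hf
end
end

section
/- Let A be an operator ideal and let f ∈ HL₀(B_X, Y). Then f is A-compact holomorphic Lipschitz (i.e., Im_L(f) is relatively A-compact in Y) if and only if its linearization T_f ∈ L(G₀(B_X), Y) is an A-compact operator, i.e., T_f(closed unit ball of G₀(B_X)) is relatively A-compact in Y. Moreover m_A(Im_L(f)) = m_A(T_f(B̄_{G₀(B_X)})). -/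
/-!
Since `T_f ∘ δ = f` on the ball, `Im_L(f) = T_f(Im_L(δ))`, and as `B̄_G` is the closed absolutely
convex hull of `Im_L(δ)` (written `closure (convexHull ℝ (balancedHull ℂ ·))`), continuity of `T_f`
gives `Im_L(f) ⊆ T_f(B̄_G) ⊆ closure (absconv Im_L(f))`. A covering `K ⊆ T(M)` with `M` relatively
compact in a Banach space passes to the closed absolutely convex hull of `K` with the same `T`,
by replacing `M` with its closed absolutely convex hull. So `Im_L(f)` and `T_f(B̄_G)` are covered
by exactly the same operators, which gives both the equivalence and the equality of `m_𝒜`.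
-/

open Metric Set Filter Topology

noncomputable section

universe u

/-- A bundled complex Banach space. -/
structure BanachSp : Type (u + 1) where
  carrier : Type u
  [nacg : NormedAddCommGroup carrier]
  [nsc : NormedSpace ℂ carrier]
  [cs : CompleteSpace carrier]

attribute [instance] BanachSp.nacg BanachSp.nsc BanachSp.cs

/-- Relative 𝒜-compactness (Carl–Stephani): K ⊆ T(M) for some Banach space W,
T ∈ 𝒜(W, Z) and relatively compact M ⊆ W. -/
def RelACompact (A : ∀ W Z : BanachSp.{u}, Set (W.carrier →L[ℂ] Z.carrier))
    (Z : BanachSp.{u}) (K : Set Z.carrier) : Prop :=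
  ∃ (W : BanachSp.{u}) (T : W.carrier →L[ℂ] Z.carrier) (M : Set W.carrier),
    T ∈ A W Z ∧ IsCompact (closure M) ∧ K ⊆ T '' M

/-- The measure m_𝒜 of 𝒜-compactness of a set. -/
def mA (A : ∀ W Z : BanachSp.{u}, Set (W.carrier →L[ℂ] Z.carrier))
    (nA : ∀ W Z : BanachSp.{u}, (W.carrier →L[ℂ] Z.carrier) → ℝ)
    (Z : BanachSp.{u}) (K : Set Z.carrier) : ℝ :=
  sInf {r : ℝ | ∃ (W : BanachSp.{u}) (T : W.carrier →L[ℂ] Z.carrier) (M : Set W.carrier),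
    T ∈ A W Z ∧ IsCompact (closure M) ∧ K ⊆ T '' M ∧ r = nA W Z T}

section AbsConvexHull

variable {𝕜 E F : Type*}

theorem image_balancedHull [NormedField 𝕜] [AddCommGroup E] [Module 𝕜 E]
    [AddCommGroup F] [Module 𝕜 F] {Fₗ : Type*} [FunLike Fₗ E F] [LinearMapClass Fₗ 𝕜 E F]
    (f : Fₗ) (s : Set E) : f '' balancedHull 𝕜 s = balancedHull 𝕜 (f '' s) := by
  ext x
  simp only [mem_image, mem_balancedHull_iff]
  constructor
  · rintro ⟨y, ⟨r, hr, z, hz, rfl⟩, rfl⟩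
    exact ⟨r, hr, map_smul f r z ▸ smul_mem_smul_set (mem_image_of_mem f hz)⟩
  · rintro ⟨r, hr, _, ⟨z, hz, rfl⟩, rfl⟩
    exact ⟨r • z, ⟨r, hr, smul_mem_smul_set hz⟩, map_smul f r z⟩

theorem image_convexHull_balancedHull [AddCommGroup E] [Module ℂ E] [AddCommGroup F]
    [Module ℂ F] {Fₗ : Type*} [FunLike Fₗ E F] [LinearMapClass Fₗ ℂ E F] (f : Fₗ) (s : Set E) :
    f '' convexHull ℝ (balancedHull ℂ s) = convexHull ℝ (balancedHull ℂ (f '' s)) := by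
  have hf : IsLinearMap ℝ f := ⟨map_add f, LinearMapClass.map_smul_of_tower f⟩
  rw [← image_balancedHull, hf.image_convexHull]

theorem subset_closure_convexHull_balancedHull [NormedField 𝕜] [NormOneClass 𝕜]
    [AddCommGroup E] [Module 𝕜 E] [Module ℝ E] [TopologicalSpace E] {s : Set E} :
    s ⊆ closure (convexHull ℝ (balancedHull 𝕜 s)) :=
  (subset_balancedHull 𝕜).trans ((subset_convexHull ℝ _).trans subset_closure)

section Normed

variable [NormedAddCommGroup E] [NormedAddCommGroup F]

theorem IsCompact.closure_balancedHull [NormedField 𝕜] [ProperSpace 𝕜] [NormedSpace 𝕜 E]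
    {M : Set E} (hM : IsCompact (closure M)) : IsCompact (closure (balancedHull 𝕜 M)) := by
  have hK : IsCompact ((fun p : 𝕜 × E => p.1 • p.2) '' (closedBall 0 1 ×ˢ closure M)) :=
    ((isCompact_closedBall 0 1).prod hM).image continuous_smul
  have hsub : balancedHull 𝕜 M ⊆ (fun p : 𝕜 × E => p.1 • p.2) '' (closedBall 0 1 ×ˢ closure M) := by
    intro x hx
    obtain ⟨r, hr, y, hy, rfl⟩ := mem_balancedHull_iff.1 hx
    exact ⟨(r, y), ⟨mem_closedBall_zero_iff.2 hr, subset_closure hy⟩, rfl⟩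
  exact hK.of_isClosed_subset isClosed_closure (closure_minimal hsub hK.isClosed)

theorem IsCompact.closure_convexHull_balancedHull [NormedField 𝕜] [ProperSpace 𝕜]
    [NormedSpace 𝕜 E] [NormedSpace ℝ E] [CompleteSpace E] {M : Set E}
    (hM : IsCompact (closure M)) :
    IsCompact (closure (convexHull ℝ (balancedHull 𝕜 M))) := by
  have hbal : TotallyBounded (balancedHull 𝕜 M) :=
    (hM.closure_balancedHull (𝕜 := 𝕜)).totallyBounded.subset subset_closure
  exact hbal.convexHull.closure.isCompact_of_isClosed isClosed_closure

variable [NormedSpace ℂ E] [NormedSpace ℂ F]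

theorem ContinuousLinearMap.image_closure_convexHull_balancedHull_subset (T : E →L[ℂ] F)
    (s : Set E) :
    T '' closure (convexHull ℝ (balancedHull ℂ s)) ⊆
      closure (convexHull ℝ (balancedHull ℂ (T '' s))) := by
  rw [← image_convexHull_balancedHull]
  exact image_closure_subset_closure_image T.continuous

end Normed

end AbsConvexHull

section RelCompactFactorization

def FactorsRelCompactly {α β : Type*} [TopologicalSpace α] (T : α → β) (K : Set β) : Prop :=
  ∃ M : Set α, IsCompact (closure M) ∧ K ⊆ T '' M

theorem FactorsRelCompactly.mono {α β : Type*} [TopologicalSpace α] {T : α → β} {K K' : Set β}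
    (h : FactorsRelCompactly T K) (hK : K' ⊆ K) : FactorsRelCompactly T K' :=
  let ⟨M, hM, hKM⟩ := h
  ⟨M, hM, hK.trans hKM⟩

/-- The witness for the hull is the closed absolutely convex hull of the witness for `K`,
compact because `E` is complete. -/
theorem FactorsRelCompactly.closure_convexHull_balancedHull {E F : Type*}
    [NormedAddCommGroup E] [NormedSpace ℂ E] [CompleteSpace E]
    [NormedAddCommGroup F] [NormedSpace ℂ F] {T : E →L[ℂ] F} {K : Set F}
    (h : FactorsRelCompactly T K) :
    FactorsRelCompactly T (closure (convexHull ℝ (balancedHull ℂ K))) := by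
  obtain ⟨M, hM, hKM⟩ := h
  have hM' : IsCompact (closure (convexHull ℝ (balancedHull ℂ M))) :=
    hM.closure_convexHull_balancedHull
  refine ⟨closure (convexHull ℝ (balancedHull ℂ M)), by rwa [closure_closure], ?_⟩
  have hhull : convexHull ℝ (balancedHull ℂ K) ⊆
      T '' closure (convexHull ℝ (balancedHull ℂ M)) :=
    calc convexHull ℝ (balancedHull ℂ K) ⊆ convexHull ℝ (balancedHull ℂ (T '' M)) :=
          convexHull_mono (balancedHull_mono hKM)
      _ = T '' convexHull ℝ (balancedHull ℂ M) := (image_convexHull_balancedHull T M).symm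
      _ ⊆ T '' closure (convexHull ℝ (balancedHull ℂ M)) := image_mono subset_closure
  exact closure_minimal hhull (hM'.image T.continuous).isClosed

end RelCompactFactorization

section ACompact

variable {A : ∀ W Z : BanachSp.{u}, Set (W.carrier →L[ℂ] Z.carrier)}
  {nA : ∀ W Z : BanachSp.{u}, (W.carrier →L[ℂ] Z.carrier) → ℝ} {Z : BanachSp.{u}}
  {K K' : Set Z.carrier}

theorem relACompact_iff_exists_factorsRelCompactly :
    RelACompact A Z K ↔
      ∃ (W : BanachSp.{u}) (T : W.carrier →L[ℂ] Z.carrier), T ∈ A W Z ∧ FactorsRelCompactly T K :=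
  ⟨fun ⟨W, T, M, hT, hM, hK⟩ => ⟨W, T, hT, M, hM, hK⟩,
    fun ⟨W, T, hT, M, hM, hK⟩ => ⟨W, T, M, hT, hM, hK⟩⟩

theorem mA_eq_sInf_factorsRelCompactly :
    mA A nA Z K = sInf {r : ℝ | ∃ (W : BanachSp.{u}) (T : W.carrier →L[ℂ] Z.carrier),
      T ∈ A W Z ∧ FactorsRelCompactly T K ∧ r = nA W Z T} := by
  unfold mA
  congr 1
  ext r
  exact ⟨fun ⟨W, T, M, hT, hM, hK, hr⟩ => ⟨W, T, hT, ⟨M, hM, hK⟩, hr⟩,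
    fun ⟨W, T, hT, ⟨M, hM, hK⟩, hr⟩ => ⟨W, T, M, hT, hM, hK, hr⟩⟩

theorem relACompact_congr
    (h : ∀ (W : BanachSp.{u}) (T : W.carrier →L[ℂ] Z.carrier),
      FactorsRelCompactly T K ↔ FactorsRelCompactly T K') :
    RelACompact A Z K ↔ RelACompact A Z K' := by
  simp only [relACompact_iff_exists_factorsRelCompactly, h]

theorem mA_congr
    (h : ∀ (W : BanachSp.{u}) (T : W.carrier →L[ℂ] Z.carrier),
      FactorsRelCompactly T K ↔ FactorsRelCompactly T K') :
    mA A nA Z K = mA A nA Z K' := by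
  simp only [mA_eq_sInf_factorsRelCompactly, h]

end ACompact

theorem lipImage_eq_image_lipImage {X G Y : Type*} [NormedAddCommGroup X] [NormedSpace ℂ X]
    [NormedAddCommGroup G] [NormedSpace ℂ G] [NormedAddCommGroup Y] [NormedSpace ℂ Y]
    {δ : X → G} {f : X → Y} (T : G →L[ℂ] Y) (hT : ∀ x ∈ ball (0 : X) 1, T (δ x) = f x) :
    LipImage f = T '' LipImage δ := by
  have hquot : ∀ x ∈ ball (0 : X) 1, ∀ y ∈ ball (0 : X) 1,
      T (‖x - y‖⁻¹ • (δ x - δ y)) = ‖x - y‖⁻¹ • (f x - f y) := by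
    intro x hx y hy
    rw [LinearMapClass.map_smul_of_tower, map_sub, hT x hx, hT y hy]
  ext v
  constructor
  · rintro ⟨x, hx, y, hy, hxy, rfl⟩
    exact ⟨_, ⟨x, hx, y, hy, hxy, rfl⟩, hquot x hx y hy⟩
  · rintro ⟨_, ⟨x, hx, y, hy, hxy, rfl⟩, rfl⟩
    exact ⟨x, hx, y, hy, hxy, hquot x hx y hy⟩

theorem aCompact_iff_linearization_aCompact_general {X : Type u}
    [NormedAddCommGroup X] [NormedSpace ℂ X]
    (A : ∀ W Z : BanachSp.{u}, Set (W.carrier →L[ℂ] Z.carrier))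
    (nA : ∀ W Z : BanachSp.{u}, (W.carrier →L[ℂ] Z.carrier) → ℝ)
    (G Y : BanachSp.{u})
    (δX : X → G.carrier)
    (hball : closedBall (0 : G.carrier) 1
      = closure (convexHull ℝ (balancedHull ℂ (LipImage δX))))
    (f : X → Y.carrier)
    (Tf : G.carrier →L[ℂ] Y.carrier)
    (hTf : ∀ x ∈ ball (0 : X) 1, Tf (δX x) = f x) :
    (RelACompact A Y (LipImage f) ↔ RelACompact A Y (Tf '' closedBall 0 1)) ∧
      mA A nA Y (LipImage f) = mA A nA Y (Tf '' closedBall 0 1) := by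
  have hIm : LipImage f = Tf '' LipImage δX := lipImage_eq_image_lipImage Tf hTf
  have hlower : LipImage f ⊆ Tf '' closedBall 0 1 := by
    rw [hIm, hball]
    exact image_mono subset_closure_convexHull_balancedHull
  have hupper : Tf '' closedBall 0 1 ⊆ closure (convexHull ℝ (balancedHull ℂ (LipImage f))) := by
    rw [hIm, hball]
    exact Tf.image_closure_convexHull_balancedHull_subset _
  have hfactor : ∀ (W : BanachSp.{u}) (T : W.carrier →L[ℂ] Y.carrier),
      FactorsRelCompactly T (LipImage f) ↔ FactorsRelCompactly T (Tf '' closedBall 0 1) :=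
    fun _ _ => ⟨fun h => h.closure_convexHull_balancedHull.mono hupper, fun h => h.mono hlower⟩
  exact ⟨relACompact_congr hfactor, mA_congr hfactor⟩

/-- for f ∈ HL₀(B_X, Y) with linearization T_f on the free space
G₀(B_X) (presented by its universal property: δ ∈ HL₀, span of δ(B_X) dense,
T_f ∘ δ = f, and the closed unit ball of G₀(B_X) is the closed absolutely convex
hull of Im_L(δ)), the Lipschitz image Im_L(f) is relatively 𝒜-compact in Y iff
T_f is an 𝒜-compact operator, and the measures of 𝒜-compactness agree:
m_𝒜(Im_L(f)) = m_𝒜(T_f(B̄_{G₀(B_X)})). -/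
theorem aCompact_iff_linearization_aCompact {X : Type u}
    [NormedAddCommGroup X] [NormedSpace ℂ X] [CompleteSpace X]
    (A : ∀ W Z : BanachSp.{u}, Set (W.carrier →L[ℂ] Z.carrier))
    (hA_comp : ∀ (U W Z V : BanachSp.{u}) (S : Z.carrier →L[ℂ] V.carrier)
      (T : W.carrier →L[ℂ] Z.carrier) (R : U.carrier →L[ℂ] W.carrier),
      T ∈ A W Z → S.comp (T.comp R) ∈ A U V)
    (hA_rank1 : ∀ (W Z : BanachSp.{u}) (φ : W.carrier →L[ℂ] ℂ) (z : Z.carrier),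
      φ.smulRight z ∈ A W Z)
    (nA : ∀ W Z : BanachSp.{u}, (W.carrier →L[ℂ] Z.carrier) → ℝ)
    (hnA_nonneg : ∀ (W Z : BanachSp.{u}) (T : W.carrier →L[ℂ] Z.carrier), 0 ≤ nA W Z T)
    (hnA_op : ∀ (W Z : BanachSp.{u}) (T : W.carrier →L[ℂ] Z.carrier), ‖T‖ ≤ nA W Z T)
    (hnA_comp : ∀ (U W Z V : BanachSp.{u}) (S : Z.carrier →L[ℂ] V.carrier)
      (T : W.carrier →L[ℂ] Z.carrier) (R : U.carrier →L[ℂ] W.carrier),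
      T ∈ A W Z → nA U V (S.comp (T.comp R)) ≤ ‖S‖ * nA W Z T * ‖R‖)
    (G Y : BanachSp.{u})
    (δX : X → G.carrier) (hδ : MemHL δX)
    (hdense : Dense (Submodule.span ℂ (δX '' ball (0 : X) 1) : Set G.carrier))
    (hball : closedBall (0 : G.carrier) 1
      = closure (convexHull ℝ (balancedHull ℂ (LipImage δX))))
    (f : X → Y.carrier) (hf : MemHL f)
    (Tf : G.carrier →L[ℂ] Y.carrier)
    (hTf : ∀ x ∈ ball (0 : X) 1, Tf (δX x) = f x) :
    (RelACompact A Y (LipImage f) ↔ RelACompact A Y (Tf '' closedBall 0 1)) ∧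
      mA A nA Y (LipImage f) = mA A nA Y (Tf '' closedBall 0 1) :=
  aCompact_iff_linearization_aCompact_general A nA G Y δX hball f Tf hTf
end
end

section
/- Let A be an operator ideal and f ∈ HL₀(B_X, Y). Then Im_L(f) is relatively A-compact if and only if there exist a Banach space Z and an operator T ∈ A(Z, Y) such that for every ε > 0 there exist finitely many points y₁,…,y_k ∈ Y with Im_L(f) ⊆ ⋃_{j=1}^{k} (y_j + ε T(B̄_Z)). -/
open Metric Set Filter Topology

noncomputable section

universe u

/-!
Write `K = Im_L(f)`. If `K ⊆ T(M)` with `M` relatively compact, an `ε`-net of the totally bounded set `M` is carried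
by `T` to a net of `K` relative to `ε • T(B̄_Z)`.

Conversely (Carl–Stephani), take nets `sₙ` at the scales `2⁻ⁿ`. The possible differences between
consecutive centres are finitely many images `T a` with `‖a‖ ≤ 2 · 2⁻ⁿ`, so each point of `K` is
`y₀ + T (∑ aₙ)` with `y₀ ∈ s₀` and `∑ aₙ` in a compact set of sums: `K` is covered by finitely many
translates of `T(C)`, `C` compact. The translates can be removed: `K` is connected, being a
continuous image of the off-diagonal of the unit ball of a space of real dimension at least two,
so it lies in a single coset `e + range T` with `e ∈ K`; it is also symmetric, so
`-e ∈ e + range T` and hence `e ∈ range T`.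
-/

open scoped Pointwise

theorem isPreconnected_offDiag_ball {E : Type*} [NormedAddCommGroup E] [NormedSpace ℝ E]
    (hE : 1 < Module.rank ℝ E) (r : ℝ) :
    IsPreconnected (ball (0 : E) r).offDiag := by
  rcases (ball (0 : E) r).offDiag.eq_empty_or_nonempty with h | ⟨p₀, hp₀⟩
  · exact h ▸ isPreconnected_empty
  have hr : 0 < r := pos_of_mem_ball hp₀.1
  set S := (fun c : E => (c, -c)) '' sphere 0 (r / 2)
  have hS : IsPreconnected S := (isPreconnected_sphere hE 0 _).image _
    (by fun_prop : Continuous fun c : E => (c, -c)).continuousOn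
  have hSsub : S ⊆ (ball 0 r).offDiag := by
    rintro _ ⟨c, hc, rfl⟩
    rw [mem_sphere_zero_iff_norm] at hc
    refine ⟨?_, ?_, fun h => ?_⟩
    · rw [mem_ball_zero_iff]; linarith
    · rw [mem_ball_zero_iff, norm_neg]; linarith
    · have h2c : ‖(2 : ℝ) • c‖ = 0 := by
        rw [two_smul]; nth_rewrite 2 [show c = -c from h]; rw [add_neg_cancel, norm_zero]
      rw [norm_smul, hc, Real.norm_two] at h2c
      linarith
  -- along the segment from `p` to `σ p` the difference of the coordinates stays a positive
  -- multiple of `p.1 - p.2`, so it never meets the diagonal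
  let σ : E × E → E × E := fun p => ((r / 2 / ‖p.1 - p.2‖) • (p.1 - p.2),
    -((r / 2 / ‖p.1 - p.2‖) • (p.1 - p.2)))
  have hσ : ∀ p ∈ (ball (0 : E) r).offDiag, σ p ∈ S := by
    rintro p ⟨-, -, hp⟩
    refine ⟨_, ?_, rfl⟩
    have : ‖p.1 - p.2‖ ≠ 0 := norm_ne_zero_iff.mpr (sub_ne_zero.mpr hp)
    rw [mem_sphere_zero_iff_norm, norm_smul, Real.norm_eq_abs, abs_of_nonneg (by positivity),
      div_mul_cancel₀ _ this]
  have hseg : ∀ p ∈ (ball (0 : E) r).offDiag, segment ℝ p (σ p) ⊆ (ball 0 r).offDiag := by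
    intro p hp
    obtain ⟨h1, h2, -⟩ := hSsub (hσ p hp)
    rintro _ ⟨a, b, ha, hb, hab, rfl⟩
    refine ⟨convex_ball 0 r hp.1 h1 ha hb hab, convex_ball 0 r hp.2.1 h2 ha hb hab, ?_⟩
    have hk : 0 < a + b * (r / ‖p.1 - p.2‖) := by
      have : 0 < ‖p.1 - p.2‖ := norm_pos_iff.mpr (sub_ne_zero.mpr hp.2.2)
      rcases ha.eq_or_lt with rfl | ha
      · rw [zero_add] at hab; rw [hab]; positivity
      · positivity
    have hdiff : (a • p + b • σ p).1 - (a • p + b • σ p).2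
        = (a + b * (r / ‖p.1 - p.2‖)) • (p.1 - p.2) := by
      simp only [σ, Prod.fst_add, Prod.snd_add, Prod.smul_fst, Prod.smul_snd]
      module
    rw [Ne, ← sub_eq_zero, hdiff]
    exact smul_ne_zero hk.ne' (sub_ne_zero.mpr hp.2.2)
  refine isPreconnected_of_forall (σ p₀) fun p hp => ⟨segment ℝ p (σ p) ∪ S,
    union_subset (hseg p hp) hSsub, Or.inr (hσ p₀ hp₀), Or.inl (left_mem_segment ℝ _ _), ?_⟩
  exact (convex_segment _ _).isPreconnected.union (σ p) (right_mem_segment ℝ _ _) (hσ p hp) hS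

section LipImage
variable {X Y : Type*} [NormedAddCommGroup X] [NormedSpace ℂ X]
  [NormedAddCommGroup Y] [NormedSpace ℂ Y]

theorem one_lt_rank_real_of_complex [Nontrivial X] : 1 < Module.rank ℝ X := by
  rw [rank_real_of_complex]
  calc (1 : Cardinal) < 2 := Cardinal.one_lt_two
    _ = 2 * 1 := (mul_one 2).symm
    _ ≤ 2 * Module.rank ℂ X := by gcongr; exact Cardinal.one_le_iff_pos.mpr Module.rank_pos_of_free

theorem lipImage_eq_image_offDiag (f : X → Y) :
    LipImage f = (fun p : X × X => ‖p.1 - p.2‖⁻¹ • (f p.1 - f p.2)) '' (ball 0 1).offDiag := by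
  ext v
  simp only [LipImage, mem_ofPred_eq, mem_image, mem_offDiag, Prod.exists]
  grind

theorem isPreconnected_lipImage {f : X → Y} (hf : ContinuousOn f (ball 0 1)) :
    IsPreconnected (LipImage f) := by
  rw [lipImage_eq_image_offDiag]
  refine IsPreconnected.image ?_ _ ?_
  · rcases subsingleton_or_nontrivial X with hX | hX
    · rw [offDiag_eq_empty.mpr subsingleton_of_subsingleton]
      exact isPreconnected_empty
    · exact isPreconnected_offDiag_ball one_lt_rank_real_of_complex 1
  · refine ContinuousOn.smul (f := fun p : X × X => ‖p.1 - p.2‖⁻¹)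
      (ContinuousOn.inv₀ (by fun_prop) fun p hp => ?_) ?_
    · exact norm_ne_zero_iff.mpr (sub_ne_zero.mpr hp.2.2)
    · exact (hf.comp continuous_fst.continuousOn fun p hp => hp.1).sub
        (hf.comp continuous_snd.continuousOn fun p hp => hp.2.1)

theorem neg_mem_lipImage {f : X → Y} {v : Y} (hv : v ∈ LipImage f) : -v ∈ LipImage f := by
  obtain ⟨x, hx, y, hy, hxy, rfl⟩ := hv
  exact ⟨y, hy, x, hx, hxy.symm, by rw [norm_sub_rev, ← smul_neg, neg_sub]⟩

end LipImage

theorem isCompact_image_tsum_pi {E : Type*} [NormedAddCommGroup E] [CompleteSpace E]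
    {H : ℕ → Set E} (hH : ∀ n, IsCompact (H n)) {r : ℕ → ℝ} (hr : Summable r)
    (hHr : ∀ n, H n ⊆ closedBall 0 (r n)) :
    IsCompact ((fun a : ℕ → E => ∑' n, a n) '' univ.pi H) :=
  (isCompact_univ_pi hH).image_of_continuousOn <|
    continuousOn_tsum (fun n => (continuous_apply n).continuousOn) hr
      fun n _ ha => mem_closedBall_zero_iff.mp (hHr n (ha n (mem_univ n)))

theorem exists_fin_subset_iUnion_add_smul_iff {M α : Type*} [Add α] [SMul M α] (K S : Set α) (ε : M) :
    (∃ (k : ℕ) (ys : Fin k → α), K ⊆ ⋃ j, (fun w => ys j + ε • w) '' S) ↔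
      ∃ s : Set α, s.Finite ∧ K ⊆ s + ε • S := by
  have hunion : ∀ {k} (ys : Fin k → α), ⋃ j, (fun w => ys j + ε • w) '' S = range ys + ε • S := by
    intro k ys
    rw [← iUnion_add_left_image, biUnion_range, ← image_smul]
    simp_rw [image_image]
  simp_rw [hunion]
  constructor
  · rintro ⟨k, ys, h⟩
    exact ⟨_, finite_range ys, h⟩
  · rintro ⟨s, hs, h⟩
    obtain ⟨k, ys, -, rfl⟩ := hs.fin_param
    exact ⟨k, ys, h⟩

section
variable {E F : Type*} [NormedAddCommGroup E] [NormedSpace ℝ E]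
  [NormedAddCommGroup F] [NormedSpace ℝ F] (T : E →L[ℝ] F)

theorem TotallyBounded.exists_finite_image_subset_add_smul {M : Set E} (hM : TotallyBounded M)
    {ε : ℝ} (hε : 0 < ε) : ∃ s : Set F, s.Finite ∧ T '' M ⊆ s + ε • T '' closedBall 0 1 := by
  obtain ⟨t, ht, hMt⟩ := totallyBounded_iff_subset_finite_iUnion_nhds_zero.mp hM
    (ε • closedBall 0 1) ((set_smul_mem_nhds_zero_iff hε.ne').mpr (closedBall_mem_nhds _ one_pos))
  simp only [iUnion_vadd_set, vadd_eq_add] at hMt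
  exact ⟨T '' t, ht.image _, (image_mono hMt).trans_eq (by rw [image_add, image_smul_set])⟩

theorem eq_add_map_tsum_of_tendsto {y : ℕ → F} {p : F} (hy : Tendsto y atTop (𝓝 p))
    {a : ℕ → E} (ha : Summable a) (hTa : ∀ n, T (a n) = y (n + 1) - y n) :
    p = y 0 + T (∑' n, a n) := by
  have hpartial : Tendsto (fun N => y N - y 0) atTop (𝓝 (T (∑' n, a n))) := by
    simpa only [hTa, Finset.sum_range_sub] using (ha.hasSum.mapL T).tendsto_sum_nat
  exact eq_add_of_sub_eq' (tendsto_nhds_unique (hy.sub_const (y 0)) hpartial)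

theorem mem_add_image_tsum_of_forall_mem_add_smul [CompleteSpace E] {ε : ℕ → ℝ}
    (hε : ∀ n, 0 ≤ ε n) (hε_anti : Antitone ε) (hε_sum : Summable ε) {s : ℕ → Set F} {H : ℕ → Set E}
    (hHs : ∀ n, (s (n + 1) - s n) ∩ T '' closedBall 0 (2 * ε n) ⊆ T '' H n)
    (hH : ∀ n, H n ⊆ closedBall 0 (2 * ε n)) {p : F}
    (hp : ∀ n, p ∈ s n + ε n • T '' closedBall 0 1) :
    p ∈ s 0 + T '' ((fun a : ℕ → E => ∑' n, a n) '' univ.pi H) := by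
  have hrep : ∀ n, ∃ y ∈ s n, ∃ z : E, ‖z‖ ≤ 1 ∧ y + ε n • T z = p := by
    intro n
    obtain ⟨y, hy, _, ⟨_, ⟨z, hz, rfl⟩, rfl⟩, hyz⟩ := hp n
    exact ⟨y, hy, z, mem_closedBall_zero_iff.mp hz, hyz⟩
  choose y hy z hz hyz using hrep
  have hinc : ∀ n, ∃ a ∈ H n, T a = y (n + 1) - y n := by
    intro n
    refine hHs n ⟨sub_mem_sub (hy _) (hy n), ε n • z n - ε (n + 1) • z (n + 1),
      mem_closedBall_zero_iff.mpr ?_, ?_⟩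
    · calc ‖ε n • z n - ε (n + 1) • z (n + 1)‖
          ≤ ε n * ‖z n‖ + ε (n + 1) * ‖z (n + 1)‖ := by
            refine (norm_sub_le _ _).trans_eq ?_
            rw [norm_smul, norm_smul, Real.norm_of_nonneg (hε n), Real.norm_of_nonneg (hε _)]
        _ ≤ ε n * 1 + ε (n + 1) * 1 := by gcongr <;> first | exact hz _ | exact hε _
        _ ≤ 2 * ε n := by linarith [hε_anti n.le_succ]
    · rw [map_sub, map_smul, map_smul]
      linear_combination (norm := module) hyz n - hyz (n + 1)
  choose a ha hTa using hinc
  have hlim : Tendsto y atTop (𝓝 p) := by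
    refine tendsto_iff_norm_sub_tendsto_zero.mpr <| squeeze_zero (fun n => norm_nonneg _)
      (fun n => ?_) (by simpa using hε_sum.tendsto_atTop_zero.const_mul ‖T‖)
    rw [← hyz n, sub_add_cancel_left, norm_neg, norm_smul, Real.norm_of_nonneg (hε n), mul_comm]
    exact mul_le_mul_of_nonneg_right ((T.le_opNorm_of_le (hz n)).trans_eq (mul_one _)) (hε n)
  have ha_sum : Summable a := (hε_sum.mul_left 2).of_norm_bounded
    fun n => mem_closedBall_zero_iff.mp (hH n (ha n))
  exact ⟨y 0, hy 0, _, ⟨_, ⟨a, fun n _ => ha n, rfl⟩, rfl⟩,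
    (eq_add_map_tsum_of_tendsto T hlim ha_sum hTa).symm⟩

theorem exists_finite_isCompact_subset_add_image [CompleteSpace E] {K : Set F}
    (hK : ∀ ε > (0 : ℝ), ∃ s : Set F, s.Finite ∧ K ⊆ s + ε • T '' closedBall 0 1) :
    ∃ s : Set F, s.Finite ∧ ∃ C : Set E, IsCompact C ∧ K ⊆ s + T '' C := by
  choose s hs hKs using fun n : ℕ => hK ((1 / 2) ^ n) (by positivity)
  choose H hH hH_fin hHs using fun n => (exists_subset_image_finite_and (f := T)).mp
    ⟨_, inter_subset_right, ((hs (n + 1)).sub (hs n)).inter_of_left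
      (T '' closedBall 0 (2 * (1 / 2) ^ n)), subset_rfl⟩
  exact ⟨s 0, hs 0, _, isCompact_image_tsum_pi (fun n => (hH_fin n).isCompact)
    (summable_geometric_two.mul_left 2) hH, fun p hp =>
    mem_add_image_tsum_of_forall_mem_add_smul T (fun n => by positivity)
      (pow_right_anti₀ (by norm_num) (by norm_num)) summable_geometric_two hHs hH
      fun n => hKs n hp⟩

theorem IsPreconnected.exists_isCompact_subset_vadd_image {K : Set F} (hK : IsPreconnected K)
    {s : Set F} (hs : s.Finite) {C : Set E} (hC : IsCompact C) (hKs : K ⊆ s + T '' C)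
    {e : F} (he : e ∈ K) : ∃ C' : Set E, IsCompact C' ∧ K ⊆ e +ᵥ T '' C' := by
  set G := {y ∈ s | y - e ∈ range T}
  have hclosed : ∀ t ⊆ s, IsClosed (t + T '' C) := fun t ht =>
    ((hs.subset ht).isCompact.add (hC.image T.continuous)).isClosed
  have hsplit : s + T '' C = (G + T '' C) ∪ ((s \ G) + T '' C) := by
    rw [← union_add, union_sdiff_cancel (sep_subset _ _)]
  have hdisj : ∀ v ∈ G + T '' C, v ∉ (s \ G) + T '' C := by
    rintro _ ⟨y, ⟨-, c₀, hc₀⟩, _, ⟨c, -, rfl⟩, rfl⟩ ⟨y', ⟨hy's, hy'G⟩, _, ⟨c', -, rfl⟩, hyy'⟩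
    refine hy'G ⟨hy's, c₀ + c - c', ?_⟩
    rw [map_sub, map_add, hc₀]
    linear_combination (norm := module) -hyy'
  have heG : e ∈ G + T '' C := by
    obtain ⟨y, hy, _, ⟨c, hc, rfl⟩, hyc⟩ := hKs he
    replace hyc : y + T c = e := hyc
    exact ⟨y, ⟨hy, -c, by rw [map_neg, ← hyc]; abel⟩, _, ⟨c, hc, rfl⟩, hyc⟩
  have hKG : K ⊆ G + T '' C := by
    refine (isPreconnected_iff_subset_of_disjoint_closed.mp hK _ _ (hclosed _ (sep_subset _ _))
      (hclosed _ sdiff_subset) (hsplit ▸ hKs) ?_).resolve_right fun h => hdisj e heG (h he)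
    exact eq_empty_iff_forall_notMem.mpr fun v ⟨_, hvG, hv⟩ => hdisj v hvG hv
  obtain ⟨H, -, hH, hGH⟩ := (exists_subset_image_finite_and (f := T) (s := univ)).mp
    ⟨G - {e}, by rintro _ ⟨y, ⟨-, hy⟩, _, rfl, rfl⟩; exact ⟨_, mem_univ _, hy.choose_spec⟩,
      (hs.subset (sep_subset _ _)).sub (finite_singleton e), subset_rfl⟩
  refine ⟨H + C, hH.isCompact.add hC, fun v hv => ?_⟩
  obtain ⟨y, hyG, _, ⟨c, hc, rfl⟩, rfl⟩ := hKG hv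
  obtain ⟨h, hh, hTh⟩ := hGH (sub_mem_sub hyG rfl)
  refine ⟨T (h + c), ⟨h + c, add_mem_add hh hc, rfl⟩, ?_⟩
  change e + T (h + c) = y + T c
  rw [map_add, hTh]
  abel

theorem exists_isCompact_subset_image_of_neg_mem {K : Set F} (hneg : ∀ v ∈ K, -v ∈ K) {e : F}
    (he : e ∈ K) {C : Set E} (hC : IsCompact C) (hK : K ⊆ e +ᵥ T '' C) :
    ∃ M : Set E, IsCompact M ∧ K ⊆ T '' M := by
  obtain ⟨_, ⟨c, -, rfl⟩, hc⟩ := hK (hneg e he)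
  replace hc : e + T c = -e := hc
  have heT : e = T (-(1 / 2 : ℝ) • c) := by
    rw [map_smul]
    linear_combination (norm := module) (1 / 2 : ℝ) • hc
  refine ⟨(-(1 / 2 : ℝ) • c) +ᵥ C, hC.vadd _, fun v hv => ?_⟩
  obtain ⟨_, ⟨c', hc', rfl⟩, rfl⟩ := hK hv
  exact ⟨_, vadd_mem_vadd_set hc', by rw [vadd_eq_add, map_add, ← heT]; rfl⟩
end

theorem aCompact_iff_eps_nets_general {X : Type u}
    [NormedAddCommGroup X] [NormedSpace ℂ X]
    (A : ∀ W Z : BanachSp.{u}, Set (W.carrier →L[ℂ] Z.carrier))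
    (Y : BanachSp.{u})
    (f : X → Y.carrier) (hf : MemHL f) :
    RelACompact A Y (LipImage f) ↔
      ∃ (Z : BanachSp.{u}) (T : Z.carrier →L[ℂ] Y.carrier), T ∈ A Z Y ∧
        ∀ ε > (0 : ℝ), ∃ (k : ℕ) (ys : Fin k → Y.carrier),
          LipImage f ⊆ ⋃ j : Fin k,
            (fun w => ys j + ε • w) '' (T '' closedBall (0 : Z.carrier) 1) := by
  simp_rw [exists_fin_subset_iUnion_add_smul_iff]
  constructor
  · rintro ⟨W, T, M, hT, hM, hKM⟩
    refine ⟨W, T, hT, fun ε hε => ?_⟩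
    obtain ⟨s, hs, hMs⟩ := (hM.totallyBounded.subset subset_closure)
      |>.exists_finite_image_subset_add_smul (T.restrictScalars ℝ) hε
    exact ⟨s, hs, hKM.trans hMs⟩
  · rintro ⟨Z, T, hT, hnets⟩
    obtain ⟨s, hs, C, hC, hKs⟩ :=
      exists_finite_isCompact_subset_add_image (T.restrictScalars ℝ) hnets
    rcases (LipImage f).eq_empty_or_nonempty with hK | ⟨e, he⟩
    · exact ⟨Z, T, ∅, hT, by simp, hK ▸ empty_subset _⟩
    obtain ⟨C', hC', hKC'⟩ := (isPreconnected_lipImage hf.2.1.continuousOn)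
      |>.exists_isCompact_subset_vadd_image (T.restrictScalars ℝ) hs hC hKs he
    obtain ⟨M, hM, hKM⟩ := exists_isCompact_subset_image_of_neg_mem (T.restrictScalars ℝ)
      (fun _ => neg_mem_lipImage) he hC' hKC'
    exact ⟨Z, T, M, hT, hM.isClosed.closure_eq.symm ▸ hM, hKM⟩

/-- the Lipschitz image Im_L(f) of f ∈ HL₀(B_X, Y) is relatively
𝒜-compact iff there are a Banach space Z and T ∈ 𝒜(Z, Y) such that for every ε > 0
there is a finite set y₁, …, y_k in Y with Im_L(f) ⊆ ⋃ⱼ (yⱼ + ε·T(B̄_Z)). -/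
theorem aCompact_iff_eps_nets {X : Type u}
    [NormedAddCommGroup X] [NormedSpace ℂ X] [CompleteSpace X]
    (A : ∀ W Z : BanachSp.{u}, Set (W.carrier →L[ℂ] Z.carrier))
    (hA_comp : ∀ (U W Z V : BanachSp.{u}) (S : Z.carrier →L[ℂ] V.carrier)
      (T : W.carrier →L[ℂ] Z.carrier) (R : U.carrier →L[ℂ] W.carrier),
      T ∈ A W Z → S.comp (T.comp R) ∈ A U V)
    (hA_rank1 : ∀ (W Z : BanachSp.{u}) (φ : W.carrier →L[ℂ] ℂ) (z : Z.carrier),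
      φ.smulRight z ∈ A W Z)
    (Y : BanachSp.{u})
    (f : X → Y.carrier) (hf : MemHL f) :
    RelACompact A Y (LipImage f) ↔
      ∃ (Z : BanachSp.{u}) (T : Z.carrier →L[ℂ] Y.carrier), T ∈ A Z Y ∧
        ∀ ε > (0 : ℝ), ∃ (k : ℕ) (ys : Fin k → Y.carrier),
          LipImage f ⊆ ⋃ j : Fin k,
            (fun w => ys j + ε • w) '' (T '' closedBall (0 : Z.carrier) 1) :=
  aCompact_iff_eps_nets_general A Y f hf
end
end

section
/- Let A be a Banach operator ideal and f ∈ HL₀(B_X, Y). Then Im_L(f) is relatively A-compact if and only if there exist an operator T ∈ A(ℓ₁, Y) and a relatively compact set K contained in the closed unit ball of ℓ₁ with Im_L(f) ⊆ T(K). -/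
open Metric Set Filter Topology

noncomputable section

universe u

instance : Fact ((1 : ENNReal) ≤ 1) := ⟨le_rfl⟩

/-- The complex Banach space ℓ₁. -/
def ell1 : BanachSp.{0} := ⟨lp (fun _ : ℕ => ℂ) 1⟩

/-! A relatively compact set `M` of a Banach space `W` factors through `ℓ¹`: approximating each
`m ∈ M` from finite `2⁻ᵏ`-nets writes it as a telescoping series `∑ dₖ` with `‖dₖ‖ ≲ 2⁻ᵏ` and each
`dₖ` taken from a finite set. Enumerating the bounded vectors `2ᵏ⁺¹ dₖ` as `(wₙ)`, the operator
`S a = ∑ aₙ wₙ` maps `∑ 2⁻ᵏ⁻¹ e_{nₖ}` to `m`, and these points of the unit ball of `ℓ¹` form a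
continuous image of a product of finite sets, hence a compact set `K`. Thus `Im_L(f) ⊆ T(M)` gives
`Im_L(f) ⊆ (T ∘ S)(K)` with `T ∘ S ∈ 𝒜` by the ideal property; the converse is trivial. -/

open scoped lp

theorem hasSum_inv_two_pow_succ : HasSum (fun k : ℕ => (2⁻¹ : ℝ) ^ (k + 1)) 1 := by
  have h := (hasSum_geometric_of_lt_one (r := (2⁻¹ : ℝ)) (by norm_num) (by norm_num)).mul_left 2⁻¹
  rwa [show (2⁻¹ : ℝ) * (1 - 2⁻¹)⁻¹ = 1 by norm_num, ← funext fun k => pow_succ' _ k] at h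

section Increments

variable {E : Type*} [NormedAddCommGroup E]

def increments (q : ℕ → E) : ℕ → E
  | 0 => q 0
  | k + 1 => q (k + 1) - q k

theorem sum_range_succ_increments (q : ℕ → E) (n : ℕ) :
    ∑ k ∈ Finset.range (n + 1), increments q k = q n := by
  induction n with
  | zero => simp [increments]
  | succ n ih => rw [Finset.sum_range_succ, ih, increments, add_sub_cancel]

theorem hasSum_increments {q : ℕ → E} {m : E} (hs : Summable fun k => ‖increments q k‖)
    (hq : Tendsto q atTop (𝓝 m)) : HasSum (increments q) m := by
  rw [hasSum_iff_tendsto_nat_of_summable_norm hs, ← tendsto_add_atTop_iff_nat 1]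
  simpa only [sum_range_succ_increments] using hq

theorem norm_increments_succ_lt {q : ℕ → E} {m : E} (hq : ∀ k, dist m (q k) < 2⁻¹ ^ k) (k : ℕ) :
    ‖increments q (k + 1)‖ < 3 * 2⁻¹ ^ (k + 1) :=
  calc ‖increments q (k + 1)‖ = dist (q (k + 1)) (q k) := (dist_eq_norm _ _).symm
    _ ≤ dist m (q (k + 1)) + dist m (q k) := dist_triangle_left _ _ _
    _ < 2⁻¹ ^ (k + 1) + 2⁻¹ ^ k := add_lt_add (hq _) (hq _)
    _ = 3 * 2⁻¹ ^ (k + 1) := by ring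

end Increments

section Synthesis

variable {ι 𝕜 E : Type*} [NormedField 𝕜] [NormedAddCommGroup E] [NormedSpace 𝕜 E]

theorem lp.norm_eq_tsum_norm_of_one {F : Type*} [NormedAddCommGroup F] (a : ℓ¹(ι, F)) :
    ‖a‖ = ∑' i, ‖a i‖ := by
  simpa using lp.norm_eq_tsum_rpow (p := 1) (by norm_num) a

theorem lp.summable_norm_of_one {F : Type*} [NormedAddCommGroup F] (a : ℓ¹(ι, F)) :
    Summable fun i => ‖a i‖ := by
  simpa using (lp.memℓp a).summable (p := 1) (by norm_num)

theorem summable_norm_smul_of_norm_le {w : ι → E} {B : ℝ} (hw : ∀ i, ‖w i‖ ≤ B)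
    (a : ℓ¹(ι, 𝕜)) : Summable fun i => ‖a i • w i‖ :=
  .of_nonneg_of_le (fun _ => norm_nonneg _)
    (fun i => (norm_smul_le _ _).trans (mul_le_mul_of_nonneg_left (hw i) (norm_nonneg _)))
    ((lp.summable_norm_of_one a).mul_right B)

variable [CompleteSpace E]

def synthesisCLM (w : ι → E) (B : ℝ) (hw : ∀ i, ‖w i‖ ≤ B) : ℓ¹(ι, 𝕜) →L[𝕜] E :=
  LinearMap.mkContinuous
    { toFun a := ∑' i, a i • w i
      map_add' a b := by
        simp only [lp.coeFn_add, Pi.add_apply, add_smul]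
        exact (summable_norm_smul_of_norm_le hw a).of_norm.tsum_add
          (summable_norm_smul_of_norm_le hw b).of_norm
      map_smul' c a := by
        simp only [lp.coeFn_smul, Pi.smul_apply, smul_eq_mul, mul_smul, RingHom.id_apply]
        exact (summable_norm_smul_of_norm_le hw a).of_norm.tsum_const_smul c }
    B fun a => by
      calc ‖∑' i, a i • w i‖ ≤ ∑' i, ‖a i‖ * B :=
            tsum_of_norm_bounded ((lp.summable_norm_of_one a).mul_right B).hasSum fun i =>
              (norm_smul_le _ _).trans (mul_le_mul_of_nonneg_left (hw i) (norm_nonneg _))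
        _ = B * ‖a‖ := by rw [tsum_mul_right, lp.norm_eq_tsum_norm_of_one, mul_comm]

theorem synthesisCLM_apply (w : ι → E) (B : ℝ) (hw : ∀ i, ‖w i‖ ≤ B) (a : ℓ¹(ι, 𝕜)) :
    synthesisCLM w B hw a = ∑' i, a i • w i := rfl

theorem synthesisCLM_single [DecidableEq ι] (w : ι → E) (B : ℝ) (hw : ∀ i, ‖w i‖ ≤ B) (i : ι) :
    synthesisCLM w B hw (lp.single 1 i (1 : 𝕜)) = w i := by
  rw [synthesisCLM_apply, tsum_eq_single i fun j hj => by rw [lp.single_apply_ne 1 i _ hj, zero_smul],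
    lp.single_apply_self, one_smul]

end Synthesis

section Factorization

variable {𝕜 : Type*} [RCLike 𝕜]

def geomSumSingle (n : ℕ → ℕ) : ℓ¹(ℕ, 𝕜) :=
  ∑' k, (2⁻¹ : 𝕜) ^ (k + 1) • lp.single 1 (n k) 1

theorem norm_geom_smul_single (k i : ℕ) :
    ‖(2⁻¹ : 𝕜) ^ (k + 1) • (lp.single 1 i 1 : ℓ¹(ℕ, 𝕜))‖ = 2⁻¹ ^ (k + 1) := by
  rw [norm_smul, norm_pow, norm_inv, RCLike.norm_ofNat, lp.norm_single (by norm_num), norm_one,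
    mul_one]

theorem norm_geomSumSingle_le (n : ℕ → ℕ) : ‖(geomSumSingle n : ℓ¹(ℕ, 𝕜))‖ ≤ 1 :=
  tsum_of_norm_bounded hasSum_inv_two_pow_succ fun k => (norm_geom_smul_single k (n k)).le

theorem continuous_geomSumSingle : Continuous (geomSumSingle : (ℕ → ℕ) → ℓ¹(ℕ, 𝕜)) :=
  continuous_tsum (fun k => by fun_prop) hasSum_inv_two_pow_succ.summable
    fun k n => (norm_geom_smul_single k (n k)).le

variable {E : Type*} [NormedAddCommGroup E] [NormedSpace 𝕜 E] [CompleteSpace E]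

theorem synthesisCLM_geomSumSingle (w : ℕ → E) (B : ℝ) (hw : ∀ i, ‖w i‖ ≤ B) (n : ℕ → ℕ) :
    synthesisCLM w B hw (geomSumSingle n : ℓ¹(ℕ, 𝕜)) = ∑' k, (2⁻¹ : 𝕜) ^ (k + 1) • w (n k) := by
  have hs : Summable fun k => (2⁻¹ : 𝕜) ^ (k + 1) • (lp.single 1 (n k) 1 : ℓ¹(ℕ, 𝕜)) :=
    .of_norm_bounded hasSum_inv_two_pow_succ.summable fun k => (norm_geom_smul_single k (n k)).le
  simp only [geomSumSingle, ContinuousLinearMap.map_tsum _ hs, map_smul, synthesisCLM_single]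

theorem exists_ell1_factorization_of_hasSum {C : Set E} (d : E → ℕ → E) (B : ℝ)
    (hfin : ∀ k, ((fun m => d m k) '' C).Finite)
    (hbound : ∀ m ∈ C, ∀ k, ‖d m k‖ ≤ B * 2⁻¹ ^ (k + 1))
    (hsum : ∀ m ∈ C, HasSum (d m) m) :
    ∃ (S : ℓ¹(ℕ, 𝕜) →L[𝕜] E) (K : Set ℓ¹(ℕ, 𝕜)),
      K ⊆ closedBall 0 1 ∧ IsCompact K ∧ C ⊆ S '' K := by
  rcases C.eq_empty_or_nonempty with rfl | hC
  · exact ⟨0, ∅, empty_subset _, isCompact_empty, empty_subset _⟩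
  obtain ⟨e, he⟩ : ∃ e : ℕ → ℕ × E, ⋃ k, (fun m => (k, d m k)) '' C = range e :=
    (countable_iUnion fun k => by simpa only [image_image] using ((hfin k).image (k, ·)).countable)
      |>.exists_eq_range ((hC.image _).mono (subset_iUnion (fun k => (fun m => (k, d m k)) '' C) 0))
  have he_mem : ∀ m ∈ C, ∀ k, (k, d m k) ∈ range e := fun m hm k =>
    he ▸ mem_iUnion.2 ⟨k, m, hm, rfl⟩
  set w : ℕ → E := fun n => (2 : 𝕜) ^ ((e n).1 + 1) • (e n).2
  have hw : ∀ n, ‖w n‖ ≤ B := by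
    intro n
    obtain ⟨k, m, hm, hkm⟩ := mem_iUnion.1 (he.symm ▸ mem_range_self n : e n ∈ _)
    simp only [w, ← hkm, norm_smul, norm_pow, RCLike.norm_ofNat]
    rw [← le_div_iff₀' (by positivity), div_eq_mul_inv, ← inv_pow]
    exact hbound m hm k
  -- The index depends on `m` only through the term `d m k`, so each index set is finite.
  set ind : E → ℕ → ℕ := fun m k => Function.invFun e (k, d m k)
  have hI : ∀ k, ((fun m => ind m k) '' C).Finite := fun k => by
    simpa only [image_image] using (hfin k).image fun x => Function.invFun e (k, x)
  have hw_ind : ∀ m ∈ C, ∀ k, w (ind m k) = (2 : 𝕜) ^ (k + 1) • d m k := fun m hm k => by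
    simp only [w, ind, Function.invFun_eq (he_mem m hm k)]
  refine ⟨synthesisCLM w B hw, geomSumSingle '' univ.pi fun k => (fun m => ind m k) '' C,
    ?_, (isCompact_univ_pi fun k => (hI k).isCompact).image continuous_geomSumSingle, ?_⟩
  · rintro _ ⟨n, -, rfl⟩
    simpa using norm_geomSumSingle_le n
  · intro m hm
    refine ⟨geomSumSingle (ind m), mem_image_of_mem _ fun k _ => mem_image_of_mem _ hm, ?_⟩
    rw [synthesisCLM_geomSumSingle]
    refine (tsum_congr fun k => ?_).trans (hsum m hm).tsum_eq
    rw [hw_ind m hm k, smul_smul, ← mul_pow, inv_mul_cancel₀ two_ne_zero, one_pow, one_smul]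

theorem IsCompact.exists_ell1_factorization {C : Set E} (hC : IsCompact C) :
    ∃ (S : ℓ¹(ℕ, 𝕜) →L[𝕜] E) (K : Set ℓ¹(ℕ, 𝕜)),
      K ⊆ closedBall 0 1 ∧ IsCompact K ∧ C ⊆ S '' K := by
  obtain ⟨r, hr⟩ := hC.isBounded.subset_closedBall 0
  choose t htC htfin hcover using fun k : ℕ =>
    finite_cover_balls_of_compact hC (pow_pos (by norm_num : (0 : ℝ) < 2⁻¹) k)
  have happrox : ∀ k, ∀ m ∈ C, ∃ x ∈ t k, dist m x < 2⁻¹ ^ k := fun k m hm => by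
    simpa using hcover k hm
  choose! q hqt hq using happrox
  have hbound : ∀ m ∈ C, ∀ k, ‖increments (q · m) k‖ ≤ (2 * r + 6) * 2⁻¹ ^ (k + 1) := by
    intro m hm k
    have hr0 : 0 ≤ r := (norm_nonneg m).trans (by simpa using hr hm)
    cases k with
    | zero =>
      have := hr (htC 0 (hqt 0 m hm))
      simp only [mem_closedBall, dist_zero_right] at this
      simp only [increments]
      linarith
    | succ k =>
      have := norm_increments_succ_lt (fun k => hq k m hm) k
      have h2 : (0 : ℝ) < 2⁻¹ ^ (k + 1) := by positivity
      rw [pow_succ _ (k + 1)]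
      nlinarith
  refine exists_ell1_factorization_of_hasSum (fun m => increments (q · m)) (2 * r + 6)
    (fun k => ?_) hbound fun m hm => hasSum_increments ?_ ?_
  · cases k with
    | zero => exact (htfin 0).subset (by rintro _ ⟨m, hm, rfl⟩; exact hqt 0 m hm)
    | succ k =>
      refine ((htfin (k + 1)).sub (htfin k)).subset ?_
      rintro _ ⟨m, hm, rfl⟩
      exact sub_mem_sub (hqt _ m hm) (hqt k m hm)
  · exact .of_nonneg_of_le (fun _ => norm_nonneg _) (hbound m hm)
      (hasSum_inv_two_pow_succ.summable.mul_left _)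
  · rw [tendsto_iff_dist_tendsto_zero]
    exact squeeze_zero (fun _ => dist_nonneg) (fun k => (dist_comm _ _).trans_le (hq k m hm).le)
      (tendsto_pow_atTop_nhds_zero_of_lt_one (by norm_num) (by norm_num))

end Factorization

theorem aCompact_iff_ell1_factorization_general {X : Type}
    [NormedAddCommGroup X] [NormedSpace ℂ X]
    (A : ∀ W Z : BanachSp.{0}, Set (W.carrier →L[ℂ] Z.carrier))
    (hA_comp : ∀ (U W Z V : BanachSp.{0}) (S : Z.carrier →L[ℂ] V.carrier)
      (T : W.carrier →L[ℂ] Z.carrier) (R : U.carrier →L[ℂ] W.carrier),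
      T ∈ A W Z → S.comp (T.comp R) ∈ A U V)
    (Y : BanachSp.{0})
    (f : X → Y.carrier) :
    RelACompact A Y (LipImage f) ↔
      ∃ T : (lp (fun _ : ℕ => ℂ) 1) →L[ℂ] Y.carrier, T ∈ A ell1 Y ∧
        ∃ K : Set (lp (fun _ : ℕ => ℂ) 1),
          K ⊆ closedBall 0 1 ∧ IsCompact (closure K) ∧ LipImage f ⊆ T '' K := by
  constructor
  · rintro ⟨W, T, M, hT, hM, hfM⟩
    obtain ⟨S, K, hK1, hK, hMS⟩ := hM.exists_ell1_factorization (𝕜 := ℂ)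
    refine ⟨_, hA_comp ell1 W Y Y (.id ℂ _) T S hT, K, hK1, hK.isClosed.closure_eq.symm ▸ hK, ?_⟩
    intro v hv
    obtain ⟨x, hx, rfl⟩ := hfM hv
    obtain ⟨a, ha, rfl⟩ := hMS (subset_closure hx)
    exact ⟨a, ha, rfl⟩
  · rintro ⟨T, hT, K, -, hK, hfK⟩
    exact ⟨ell1, T, K, hT, hK, hfK⟩

/-- the Lipschitz image Im_L(f) of f ∈ HL₀(B_X, Y) is relatively
𝒜-compact iff there are an operator T ∈ 𝒜(ℓ₁, Y) and a relatively compact set K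
contained in the closed unit ball of ℓ₁ with Im_L(f) ⊆ T(K). -/
theorem aCompact_iff_ell1_factorization {X : Type}
    [NormedAddCommGroup X] [NormedSpace ℂ X] [CompleteSpace X]
    (A : ∀ W Z : BanachSp.{0}, Set (W.carrier →L[ℂ] Z.carrier))
    (hA_comp : ∀ (U W Z V : BanachSp.{0}) (S : Z.carrier →L[ℂ] V.carrier)
      (T : W.carrier →L[ℂ] Z.carrier) (R : U.carrier →L[ℂ] W.carrier),
      T ∈ A W Z → S.comp (T.comp R) ∈ A U V)
    (hA_rank1 : ∀ (W Z : BanachSp.{0}) (φ : W.carrier →L[ℂ] ℂ) (z : Z.carrier),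
      φ.smulRight z ∈ A W Z)
    (Y : BanachSp.{0})
    (f : X → Y.carrier) (hf : MemHL f) :
    RelACompact A Y (LipImage f) ↔
      ∃ T : (lp (fun _ : ℕ => ℂ) 1) →L[ℂ] Y.carrier, T ∈ A ell1 Y ∧
        ∃ K : Set (lp (fun _ : ℕ => ℂ) 1),
          K ⊆ closedBall 0 1 ∧ IsCompact (closure K) ∧ LipImage f ⊆ T '' K :=
  aCompact_iff_ell1_factorization_general A hA_comp Y f
end
end

section
/- Let A be an s-normed operator ideal. A map f ∈ HL₀(B_X, Y) admits a factorization f = S ∘ h with S ∈ A(Z, Y) and h ∈ HL₀(B_X, Z) for some complex Banach space Z, if and only if its linearization T_f belongs to A(G₀(B_X), Y). In that case, inf{‖S‖_A · L(h)} over all such factorizations equals ‖T_f‖_A. -/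
open Metric Set Filter Topology

noncomputable section

universe u

/-!
A factorization `f = S ∘ h` on the ball linearizes to `T_f = S ∘ T_h`, since both sides agree on
the dense span of `δ_X(B_X)`. The ideal property then gives `T_f ∈ 𝒜` with
`‖T_f‖_𝒜 ≤ ‖S‖_𝒜 ‖T_h‖ = ‖S‖_𝒜 L(h)`. Conversely `f = T_f ∘ δ_X` is itself such a factorization,
and `L(δ_X) = 1` makes it attain the infimum.
-/

theorem ContinuousLinearMap.eq_comp_of_dense_span {𝕜 α E F H : Type*} [NontriviallyNormedField 𝕜]
    [NormedAddCommGroup E] [NormedSpace 𝕜 E] [NormedAddCommGroup F] [NormedSpace 𝕜 F]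
    [NormedAddCommGroup H] [NormedSpace 𝕜 H] {δ : α → E} {B : Set α}
    (hdense : Dense (Submodule.span 𝕜 (δ '' B) : Set E)) {f : α → H} {h : α → F}
    {Tf : E →L[𝕜] H} {Th : E →L[𝕜] F} {S : F →L[𝕜] H}
    (hTf : ∀ x ∈ B, Tf (δ x) = f x) (hTh : ∀ x ∈ B, Th (δ x) = h x)
    (hfac : ∀ x ∈ B, f x = S (h x)) : Tf = S.comp Th :=
  ext_on hdense <| by
    rintro _ ⟨x, hx, rfl⟩
    simp only [comp_apply, hTf x hx, hTh x hx, hfac x hx]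

section OperatorIdeal

variable (A : ∀ W Z : BanachSp.{u}, Set (W.carrier →L[ℂ] Z.carrier))
  (nA : ∀ W Z : BanachSp.{u}, (W.carrier →L[ℂ] Z.carrier) → ℝ)
  {W Z Y : BanachSp.{u}} {S : Z.carrier →L[ℂ] Y.carrier}

theorem comp_mem_ideal
    (hA_comp : ∀ (U W Z V : BanachSp.{u}) (S : Z.carrier →L[ℂ] V.carrier)
      (T : W.carrier →L[ℂ] Z.carrier) (R : U.carrier →L[ℂ] W.carrier),
      T ∈ A W Z → S.comp (T.comp R) ∈ A U V)
    (hS : S ∈ A Z Y) (R : W.carrier →L[ℂ] Z.carrier) : S.comp R ∈ A W Y := by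
  simpa using hA_comp W Z Y Y (.id ℂ _) S R hS

theorem idealNorm_comp_le
    (hnA_nonneg : ∀ (W Z : BanachSp.{u}) (T : W.carrier →L[ℂ] Z.carrier), 0 ≤ nA W Z T)
    (hnA_comp : ∀ (U W Z V : BanachSp.{u}) (S : Z.carrier →L[ℂ] V.carrier)
      (T : W.carrier →L[ℂ] Z.carrier) (R : U.carrier →L[ℂ] W.carrier),
      T ∈ A W Z → nA U V (S.comp (T.comp R)) ≤ ‖S‖ * nA W Z T * ‖R‖)
    (hS : S ∈ A Z Y) (R : W.carrier →L[ℂ] Z.carrier) :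
    nA W Y (S.comp R) ≤ nA Z Y S * ‖R‖ :=
  calc nA W Y (S.comp R)
      = nA W Y ((ContinuousLinearMap.id ℂ Y.carrier).comp (S.comp R)) := by
        rw [ContinuousLinearMap.id_comp]
    _ ≤ ‖ContinuousLinearMap.id ℂ Y.carrier‖ * nA Z Y S * ‖R‖ := hnA_comp W Z Y Y _ S R hS
    _ ≤ 1 * nA Z Y S * ‖R‖ := by
        have := hnA_nonneg Z Y S
        gcongr
        exact ContinuousLinearMap.norm_id_le
    _ = nA Z Y S * ‖R‖ := by rw [one_mul]

end OperatorIdeal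

theorem exists_linearization_comp {X : Type u} [NormedAddCommGroup X] [NormedSpace ℂ X]
    {G Y Z : BanachSp.{u}} {δX : X → G.carrier}
    (hdense : Dense (Submodule.span ℂ (δX '' ball (0 : X) 1) : Set G.carrier))
    (hlin : ∀ (Z : BanachSp.{u}) (h : X → Z.carrier), MemHL h →
      ∃ T : G.carrier →L[ℂ] Z.carrier,
        (∀ x ∈ ball (0 : X) 1, T (δX x) = h x) ∧ ‖T‖ = LipNorm h)
    {f : X → Y.carrier} {Tf : G.carrier →L[ℂ] Y.carrier}
    (hTf : ∀ x ∈ ball (0 : X) 1, Tf (δX x) = f x)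
    {S : Z.carrier →L[ℂ] Y.carrier} {h : X → Z.carrier} (hh : MemHL h)
    (hfac : ∀ x ∈ ball (0 : X) 1, f x = S (h x)) :
    ∃ Th : G.carrier →L[ℂ] Z.carrier, Tf = S.comp Th ∧ ‖Th‖ = LipNorm h := by
  obtain ⟨Th, hTh, hThnorm⟩ := hlin Z h hh
  exact ⟨Th, ContinuousLinearMap.eq_comp_of_dense_span hdense hTf hTh hfac, hThnorm⟩

theorem composition_ideal_iff_linearization_general {X : Type u}
    [NormedAddCommGroup X] [NormedSpace ℂ X]
    (A : ∀ W Z : BanachSp.{u}, Set (W.carrier →L[ℂ] Z.carrier))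
    (hA_comp : ∀ (U W Z V : BanachSp.{u}) (S : Z.carrier →L[ℂ] V.carrier)
      (T : W.carrier →L[ℂ] Z.carrier) (R : U.carrier →L[ℂ] W.carrier),
      T ∈ A W Z → S.comp (T.comp R) ∈ A U V)
    (nA : ∀ W Z : BanachSp.{u}, (W.carrier →L[ℂ] Z.carrier) → ℝ)
    (hnA_nonneg : ∀ (W Z : BanachSp.{u}) (T : W.carrier →L[ℂ] Z.carrier), 0 ≤ nA W Z T)
    (hnA_comp : ∀ (U W Z V : BanachSp.{u}) (S : Z.carrier →L[ℂ] V.carrier)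
      (T : W.carrier →L[ℂ] Z.carrier) (R : U.carrier →L[ℂ] W.carrier),
      T ∈ A W Z → nA U V (S.comp (T.comp R)) ≤ ‖S‖ * nA W Z T * ‖R‖)
    (G Y : BanachSp.{u})
    (δX : X → G.carrier) (hδ : MemHL δX) (hδnorm : LipNorm δX = 1)
    (hdense : Dense (Submodule.span ℂ (δX '' ball (0 : X) 1) : Set G.carrier))
    (hlin : ∀ (Z : BanachSp.{u}) (h : X → Z.carrier), MemHL h →
      ∃ T : G.carrier →L[ℂ] Z.carrier,
        (∀ x ∈ ball (0 : X) 1, T (δX x) = h x) ∧ ‖T‖ = LipNorm h)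
    (f : X → Y.carrier)
    (Tf : G.carrier →L[ℂ] Y.carrier)
    (hTf : ∀ x ∈ ball (0 : X) 1, Tf (δX x) = f x) :
    ((∃ (Z : BanachSp.{u}) (S : Z.carrier →L[ℂ] Y.carrier) (h : X → Z.carrier),
        S ∈ A Z Y ∧ MemHL h ∧ ∀ x ∈ ball (0 : X) 1, f x = S (h x)) ↔
      Tf ∈ A G Y) ∧
    (Tf ∈ A G Y →
      sInf {r : ℝ | ∃ (Z : BanachSp.{u}) (S : Z.carrier →L[ℂ] Y.carrier)
          (h : X → Z.carrier), S ∈ A Z Y ∧ MemHL h ∧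
          (∀ x ∈ ball (0 : X) 1, f x = S (h x)) ∧ r = nA Z Y S * LipNorm h}
        = nA G Y Tf) := by
  have hfδ : ∀ x ∈ ball (0 : X) 1, f x = Tf (δX x) := fun x hx => (hTf x hx).symm
  refine ⟨⟨?_, fun hTfA => ⟨G, Tf, δX, hTfA, hδ, hfδ⟩⟩, fun hTfA => ?_⟩
  · rintro ⟨Z, S, h, hS, hh, hfac⟩
    obtain ⟨Th, rfl, -⟩ := exists_linearization_comp hdense hlin hTf hh hfac
    exact comp_mem_ideal A hA_comp hS Th
  · refine IsLeast.csInf_eq ⟨⟨G, Tf, δX, hTfA, hδ, hfδ, by rw [hδnorm, mul_one]⟩, ?_⟩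
    rintro _ ⟨Z, S, h, hS, hh, hfac, rfl⟩
    obtain ⟨Th, rfl, hThnorm⟩ := exists_linearization_comp hdense hlin hTf hh hfac
    exact hThnorm ▸ idealNorm_comp_le A nA hnA_nonneg hnA_comp hS Th

/-- for an s-normed operator ideal [𝒜, ‖·‖_𝒜], a holomorphic Lipschitz
map f factors as f = S ∘ h with S ∈ 𝒜(Z, Y) and h ∈ HL₀(B_X, Z) for some Banach
space Z iff its linearization T_f belongs to 𝒜(G₀(B_X), Y); and in that case
inf{‖S‖_𝒜 · L(h)} over all factorizations equals ‖T_f‖_𝒜. -/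
theorem composition_ideal_iff_linearization {X : Type u}
    [NormedAddCommGroup X] [NormedSpace ℂ X] [CompleteSpace X]
    (A : ∀ W Z : BanachSp.{u}, Set (W.carrier →L[ℂ] Z.carrier))
    (hA_comp : ∀ (U W Z V : BanachSp.{u}) (S : Z.carrier →L[ℂ] V.carrier)
      (T : W.carrier →L[ℂ] Z.carrier) (R : U.carrier →L[ℂ] W.carrier),
      T ∈ A W Z → S.comp (T.comp R) ∈ A U V)
    (hA_rank1 : ∀ (W Z : BanachSp.{u}) (φ : W.carrier →L[ℂ] ℂ) (z : Z.carrier),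
      φ.smulRight z ∈ A W Z)
    (s : ℝ) (hs0 : 0 < s) (hs1 : s ≤ 1)
    (nA : ∀ W Z : BanachSp.{u}, (W.carrier →L[ℂ] Z.carrier) → ℝ)
    (hnA_nonneg : ∀ (W Z : BanachSp.{u}) (T : W.carrier →L[ℂ] Z.carrier), 0 ≤ nA W Z T)
    (hnA_op : ∀ (W Z : BanachSp.{u}) (T : W.carrier →L[ℂ] Z.carrier), ‖T‖ ≤ nA W Z T)
    (hnA_tri : ∀ (W Z : BanachSp.{u}) (T T' : W.carrier →L[ℂ] Z.carrier),
      nA W Z (T + T') ^ s ≤ nA W Z T ^ s + nA W Z T' ^ s)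
    (hnA_comp : ∀ (U W Z V : BanachSp.{u}) (S : Z.carrier →L[ℂ] V.carrier)
      (T : W.carrier →L[ℂ] Z.carrier) (R : U.carrier →L[ℂ] W.carrier),
      T ∈ A W Z → nA U V (S.comp (T.comp R)) ≤ ‖S‖ * nA W Z T * ‖R‖)
    (G Y : BanachSp.{u})
    (δX : X → G.carrier) (hδ : MemHL δX) (hδnorm : LipNorm δX = 1)
    (hdense : Dense (Submodule.span ℂ (δX '' ball (0 : X) 1) : Set G.carrier))
    (hlin : ∀ (Z : BanachSp.{u}) (h : X → Z.carrier), MemHL h →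
      ∃ T : G.carrier →L[ℂ] Z.carrier,
        (∀ x ∈ ball (0 : X) 1, T (δX x) = h x) ∧ ‖T‖ = LipNorm h)
    (f : X → Y.carrier) (hf : MemHL f)
    (Tf : G.carrier →L[ℂ] Y.carrier)
    (hTf : ∀ x ∈ ball (0 : X) 1, Tf (δX x) = f x) (hTfnorm : ‖Tf‖ = LipNorm f) :
    ((∃ (Z : BanachSp.{u}) (S : Z.carrier →L[ℂ] Y.carrier) (h : X → Z.carrier),
        S ∈ A Z Y ∧ MemHL h ∧ ∀ x ∈ ball (0 : X) 1, f x = S (h x)) ↔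
      Tf ∈ A G Y) ∧
    (Tf ∈ A G Y →
      sInf {r : ℝ | ∃ (Z : BanachSp.{u}) (S : Z.carrier →L[ℂ] Y.carrier)
          (h : X → Z.carrier), S ∈ A Z Y ∧ MemHL h ∧
          (∀ x ∈ ball (0 : X) 1, f x = S (h x)) ∧ r = nA Z Y S * LipNorm h}
        = nA G Y Tf) :=
  composition_ideal_iff_linearization_general A hA_comp nA hnA_nonneg hnA_comp G Y δX hδ hδnorm
    hdense hlin f Tf hTf
end
end

section
/- Let f ∈ HL₀(B_X, Y). Then f is compact holomorphic Lipschitz (i.e., Im_L(f) is relatively compact in Y) if and only if the transpose f^t : Y* → HL₀(B_X) is a compact operator. -/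
/-! Both conditions are total boundedness statements about the pairing `(v, y*) ↦ y*(v)` of
`Im_L(f)` with the unit ball of `Y*`. By Hahn–Banach, `Im_L(f)` is totally bounded iff the
functions `y* ↦ y*(v)`, `v ∈ Im_L(f)`, form a totally bounded family for the uniform distance on the
ball; exchanging the roles of points and functionals (the elementary core of Schauder's theorem)
turns this into total boundedness of the restrictions `y*|_{Im_L(f)}`. Since `‖T_g‖ = L(g)` and
the Lipschitz constant of `y* ∘ f` is `sup_{v ∈ Im_L(f)} |y*(v)|`, the transpose is an isometry
for exactly that uniform distance. -/

open Metric Set Filter Topology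

noncomputable section

universe u

section UniformlyTotallyBounded

variable {α β E M : Type*} [PseudoMetricSpace E]

def UniformlyTotallyBounded (F : α → β → E) (s : Set α) (u : Set β) : Prop :=
  ∀ ε > 0, ∃ t ⊆ s, t.Finite ∧ ∀ a ∈ s, ∃ a' ∈ t, ∀ b ∈ u, dist (F a b) (F a' b) ≤ ε

theorem totallyBounded_image_iff_uniformlyTotallyBounded [PseudoMetricSpace M] (Φ : α → M)
    (F : α → β → E) {s : Set α} {u : Set β}
    (hΦ : ∀ a ∈ s, ∀ a' ∈ s, ∀ ε > 0,
      dist (Φ a) (Φ a') ≤ ε ↔ ∀ b ∈ u, dist (F a b) (F a' b) ≤ ε) :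
    TotallyBounded (Φ '' s) ↔ UniformlyTotallyBounded F s u := by
  constructor
  · intro h ε hε
    obtain ⟨t, hts, htfin, hcover⟩ := finite_approx_of_totallyBounded h ε hε
    obtain ⟨t', ht's, ht'fin, hcover'⟩ :=
      exists_subset_image_finite_and (p := fun t => Φ '' s ⊆ ⋃ y ∈ t, ball y ε) |>.1
        ⟨t, hts, htfin, hcover⟩
    refine ⟨t', ht's, ht'fin, fun a ha => ?_⟩
    obtain ⟨a', ha', hd⟩ : ∃ a' ∈ t', dist (Φ a) (Φ a') < ε := by
      simpa using hcover' (mem_image_of_mem Φ ha)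
    exact ⟨a', ha', (hΦ a ha a' (ht's ha') ε hε).1 hd.le⟩
  · intro h
    rw [Metric.totallyBounded_iff]
    intro ε hε
    obtain ⟨t, hts, htfin, hnet⟩ := h (ε / 2) (half_pos hε)
    refine ⟨Φ '' t, htfin.image Φ, ?_⟩
    rintro _ ⟨a, ha, rfl⟩
    obtain ⟨a', ha', hd⟩ := hnet a ha
    have hd' := (hΦ a ha a' (hts ha') _ (half_pos hε)).2 hd
    exact mem_biUnion (mem_image_of_mem Φ ha') (mem_ball.2 (hd'.trans_lt (half_lt_self hε)))

theorem UniformlyTotallyBounded.flip {F : α → β → E} {s : Set α} {u : Set β} {K : Set E}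
    (hK : IsCompact K) (hFK : ∀ a ∈ s, ∀ b ∈ u, F a b ∈ K) (h : UniformlyTotallyBounded F s u) :
    UniformlyTotallyBounded (flip F) u s := by
  -- Evaluation at a finite `ε/3`-net `t` of the `F a` maps `u` into the compact set `Kᵗ`;
  -- by the triangle inequality through `F a'`, a finite `ε/3`-net of `u` for it works for every `F a`.
  intro ε hε
  obtain ⟨t, hts, htfin, hnet⟩ := h (ε / 3) (by positivity)
  have := htfin.fintype
  have hev : TotallyBounded ((fun b (a : t) => F a b) '' u) := by
    refine (isCompact_univ_pi fun _ => hK).totallyBounded.subset ?_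
    rintro _ ⟨b, hb, rfl⟩ a -
    exact hFK a (hts a.2) b hb
  obtain ⟨t', ht'u, ht'fin, hnet'⟩ :=
    (totallyBounded_image_iff_uniformlyTotallyBounded (fun b (a : t) => F a b)
      (fun b (a : t) => F a b) (u := univ)
      fun b _ b' _ δ hδ => by simp [dist_pi_le_iff hδ.le]).1 hev (ε / 3) (by positivity)
  refine ⟨t', ht'u, ht'fin, fun b hb => ?_⟩
  obtain ⟨b', hb', hbb'⟩ := hnet' b hb
  refine ⟨b', hb', fun a ha => ?_⟩
  obtain ⟨a', ha', haa'⟩ := hnet a ha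
  calc dist (F a b) (F a b')
      ≤ dist (F a b) (F a' b) + dist (F a' b) (F a' b') + dist (F a' b') (F a b') :=
        dist_triangle4 _ _ _ _
    _ ≤ ε / 3 + ε / 3 + ε / 3 := by
        gcongr
        · exact haa' b hb
        · exact hbb' ⟨a', ha'⟩ trivial
        · rw [dist_comm]; exact haa' b' (ht'u hb')
    _ = ε := by ring

theorem uniformlyTotallyBounded_flip_iff {F : α → β → E} {s : Set α} {u : Set β} {K : Set E}
    (hK : IsCompact K) (hFK : ∀ a ∈ s, ∀ b ∈ u, F a b ∈ K) :
    UniformlyTotallyBounded (flip F) u s ↔ UniformlyTotallyBounded F s u :=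
  ⟨fun h => h.flip hK fun b hb a ha => hFK a ha b hb, fun h => h.flip hK hFK⟩

end UniformlyTotallyBounded

theorem isCompact_closure_iff_totallyBounded {α : Type*} [UniformSpace α] [CompleteSpace α]
    {s : Set α} : IsCompact (closure s) ↔ TotallyBounded s := by
  rw [isCompact_iff_totallyBounded_isComplete, totallyBounded_closure]
  exact and_iff_left isClosed_closure.isComplete

theorem dist_le_iff_forall_dual {𝕜 E : Type*} [RCLike 𝕜] [NormedAddCommGroup E]
    [NormedSpace 𝕜 E] (x y : E) {ε : ℝ} :
    dist x y ≤ ε ↔ ∀ φ ∈ closedBall (0 : StrongDual 𝕜 E) 1, dist (φ x) (φ y) ≤ ε := by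
  refine ⟨fun h φ hφ => ?_, fun h => ?_⟩
  · rw [dist_eq_norm, ← map_sub]
    calc ‖φ (x - y)‖ ≤ ‖φ‖ * ‖x - y‖ := φ.le_opNorm _
      _ ≤ 1 * ε := by
          rw [← dist_eq_norm]
          exact mul_le_mul (mem_closedBall_zero_iff.1 hφ) h dist_nonneg zero_le_one
      _ = ε := one_mul ε
  · obtain ⟨φ, hφ, hφxy⟩ := exists_dual_vector'' 𝕜 (x - y)
    have := h φ (mem_closedBall_zero_iff.2 hφ)
    rwa [dist_eq_norm, ← map_sub, hφxy, RCLike.norm_ofReal, abs_norm, ← dist_eq_norm] at this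

section LipImage

variable {X Y Z : Type*} [NormedAddCommGroup X] [NormedSpace ℂ X]
  [NormedAddCommGroup Y] [NormedSpace ℂ Y] [NormedAddCommGroup Z] [NormedSpace ℂ Z]

theorem lipImage_eq_image (g : X → Y) :
    LipImage g = (fun p : X × X => ‖p.1 - p.2‖⁻¹ • (g p.1 - g p.2)) ''
      {p : X × X | p.1 ∈ ball (0 : X) 1 ∧ p.2 ∈ ball (0 : X) 1 ∧ p.1 ≠ p.2} := by
  ext v
  simp only [LipImage, mem_ofPred_eq, mem_image, Prod.exists]
  aesop

theorem lipNorm_eq_sSup_norm_lipImage (g : X → Y) : LipNorm g = sSup (norm '' LipImage g) := by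
  rw [lipImage_eq_image, image_image, LipNorm]
  simp only [norm_smul, norm_inv, norm_norm, div_eq_inv_mul]

theorem lipImage_comp_clm (χ : Y →L[ℂ] Z) (g : X → Y) :
    LipImage (fun x => χ (g x)) = χ '' LipImage g := by
  simp only [lipImage_eq_image, image_image, ContinuousLinearMap.map_smul_of_tower, map_sub]

theorem MemHL.isBounded_lipImage {g : X → Y} (hg : MemHL g) : Bornology.IsBounded (LipImage g) := by
  obtain ⟨-, -, C, hC⟩ := hg
  refine isBounded_iff_forall_norm_le.2 ⟨C, ?_⟩
  rintro _ ⟨x, hx, y, hy, hxy, rfl⟩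
  have hxy' : 0 < ‖x - y‖ := norm_pos_iff.2 (sub_ne_zero.2 hxy)
  rw [norm_smul, norm_inv, norm_norm, inv_mul_le_iff₀ hxy', mul_comm]
  exact hC x hx y hy

theorem lipNorm_le_iff {g : X → Y} (hg : MemHL g) {ε : ℝ} (hε : 0 ≤ ε) :
    LipNorm g ≤ ε ↔ ∀ v ∈ LipImage g, ‖v‖ ≤ ε := by
  obtain ⟨C, hC⟩ := isBounded_iff_forall_norm_le.1 hg.isBounded_lipImage
  rw [lipNorm_eq_sSup_norm_lipImage, ← forall_mem_image (f := norm) (p := (· ≤ ε))]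
  exact ⟨fun h r hr => (le_csSup ⟨C, forall_mem_image.2 hC⟩ hr).trans h, fun h => Real.sSup_le h hε⟩

theorem MemHL.comp_clm {g : X → Y} (hg : MemHL g) (χ : Y →L[ℂ] Z) : MemHL (fun x => χ (g x)) := by
  obtain ⟨h0, hdiff, C, hC⟩ := hg
  refine ⟨by simp [h0], χ.differentiable.comp_differentiableOn hdiff, ‖χ‖ * C, ?_⟩
  intro x hx y hy
  calc ‖χ (g x) - χ (g y)‖ = ‖χ (g x - g y)‖ := by rw [map_sub]
    _ ≤ ‖χ‖ * ‖g x - g y‖ := χ.le_opNorm _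
    _ ≤ ‖χ‖ * (C * ‖x - y‖) := by gcongr; exact hC x hx y hy
    _ = ‖χ‖ * C * ‖x - y‖ := by ring

end LipImage

section Transpose

variable {X Y G : Type*} [NormedAddCommGroup X] [NormedSpace ℂ X]
  [NormedAddCommGroup Y] [NormedSpace ℂ Y] [NormedAddCommGroup G] [NormedSpace ℂ G]
  {δX : X → G} {linC : (X → ℂ) → (G →L[ℂ] ℂ)} {f : X → Y}

theorem isLinearMap_transpose
    (hdense : Dense (Submodule.span ℂ (δX '' ball (0 : X) 1) : Set G))
    (hlinC : ∀ g : X → ℂ, MemHL g → ∀ x ∈ ball (0 : X) 1, linC g (δX x) = g x) (hf : MemHL f) :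
    IsLinearMap ℂ (fun φ : Y →L[ℂ] ℂ => linC (fun x => φ (f x))) := by
  have hT : ∀ (φ : Y →L[ℂ] ℂ), ∀ x ∈ ball (0 : X) 1, linC (fun x => φ (f x)) (δX x) = φ (f x) :=
    fun φ => hlinC _ (hf.comp_clm φ)
  have hext : ∀ T T' : G →L[ℂ] ℂ, (∀ x ∈ ball (0 : X) 1, T (δX x) = T' (δX x)) → T = T' :=
    fun T T' h => ContinuousLinearMap.ext_on hdense (by rintro _ ⟨x, hx, rfl⟩; exact h x hx)
  refine ⟨fun φ ψ => hext _ _ fun x hx => ?_, fun c φ => hext _ _ fun x hx => ?_⟩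
  · rw [add_apply, hT _ x hx, hT _ x hx, hT _ x hx]
    rfl
  · rw [smul_apply, hT _ x hx, hT _ x hx]
    rfl

theorem dist_transpose_le_iff
    (hdense : Dense (Submodule.span ℂ (δX '' ball (0 : X) 1) : Set G))
    (hlinC : ∀ g : X → ℂ, MemHL g → ∀ x ∈ ball (0 : X) 1, linC g (δX x) = g x)
    (hlinCnorm : ∀ g : X → ℂ, MemHL g → ‖linC g‖ = LipNorm g) (hf : MemHL f)
    (φ ψ : Y →L[ℂ] ℂ) {ε : ℝ} (hε : 0 ≤ ε) :
    dist (linC (fun x => φ (f x))) (linC (fun x => ψ (f x))) ≤ ε ↔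
      ∀ v ∈ LipImage f, dist (φ v) (ψ v) ≤ ε := by
  rw [dist_eq_norm, ← (isLinearMap_transpose hdense hlinC hf).map_sub,
    hlinCnorm _ (hf.comp_clm _), lipNorm_le_iff (hf.comp_clm _) hε, lipImage_comp_clm,
    forall_mem_image]
  simp only [sub_apply, dist_eq_norm]

end Transpose

/-- `linC` plays the role of `Λ_X : HL₀(B_X) → G₀(B_X)*`, so the operator below is `f^t`
transported along `Λ_X`. -/
theorem compactHL_iff_transpose_compact_general {X Y G : Type*}
    [NormedAddCommGroup X] [NormedSpace ℂ X]
    [NormedAddCommGroup Y] [NormedSpace ℂ Y] [CompleteSpace Y]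
    [NormedAddCommGroup G] [NormedSpace ℂ G]
    (δX : X → G)
    (hdense : Dense (Submodule.span ℂ (δX '' ball (0 : X) 1) : Set G))
    (linC : (X → ℂ) → (G →L[ℂ] ℂ))
    (hlinC : ∀ g : X → ℂ, MemHL g → ∀ x ∈ ball (0 : X) 1, linC g (δX x) = g x)
    (hlinCnorm : ∀ g : X → ℂ, MemHL g → ‖linC g‖ = LipNorm g)
    (f : X → Y) (hf : MemHL f) :
    IsCompact (closure (LipImage f)) ↔
      IsCompactOperator (fun φ : Y →L[ℂ] ℂ => linC (fun x => φ (f x))) := by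
  set S := fun φ : Y →L[ℂ] ℂ => linC (fun x => φ (f x))
  obtain ⟨C, hC⟩ := isBounded_iff_forall_norm_le.1 hf.isBounded_lipImage
  have hpairing : ∀ v ∈ LipImage f, ∀ φ ∈ closedBall (0 : Y →L[ℂ] ℂ) 1,
      φ v ∈ closedBall (0 : ℂ) C := by
    intro v hv φ hφ
    rw [mem_closedBall_zero_iff] at hφ ⊢
    calc ‖φ v‖ ≤ ‖φ‖ * ‖v‖ := φ.le_opNorm v
      _ ≤ 1 * C := mul_le_mul hφ (hC v hv) (norm_nonneg v) zero_le_one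
      _ = C := one_mul C
  calc IsCompact (closure (LipImage f))
      ↔ TotallyBounded (LipImage f) := isCompact_closure_iff_totallyBounded
    _ ↔ UniformlyTotallyBounded (fun v (φ : Y →L[ℂ] ℂ) => φ v) (LipImage f) (closedBall 0 1) := by
        simpa using totallyBounded_image_iff_uniformlyTotallyBounded id _
          fun v _ w _ _ _ => dist_le_iff_forall_dual (𝕜 := ℂ) v w
    _ ↔ UniformlyTotallyBounded (fun (φ : Y →L[ℂ] ℂ) v => φ v) (closedBall 0 1) (LipImage f) :=
        (uniformlyTotallyBounded_flip_iff (isCompact_closedBall 0 C) hpairing).symm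
    _ ↔ TotallyBounded (S '' closedBall 0 1) :=
        (totallyBounded_image_iff_uniformlyTotallyBounded S _ fun φ _ ψ _ ε hε =>
          dist_transpose_le_iff hdense hlinC hlinCnorm hf φ ψ hε.le).symm
    _ ↔ IsCompact (closure (S '' closedBall 0 1)) := isCompact_closure_iff_totallyBounded.symm
    _ ↔ IsCompactOperator S := (isCompactOperator_iff_isCompact_closure_image_closedBall
        (isLinearMap_transpose hdense hlinC hf).mk' one_pos).symm

/-- f ∈ HL₀(B_X, Y) is compact holomorphic Lipschitz (Im_L(f)
relatively compact) iff its transpose f^t : Y* → HL₀(B_X), y* ↦ y* ∘ f, is a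
compact operator.  HL₀(B_X) is identified with the dual G₀(B_X)* via the canonical
isometric isomorphism Λ_X (hypothesized through linC), so that f^t corresponds to
y* ↦ T_{y* ∘ f}. -/
theorem compactHL_iff_transpose_compact {X Y G : Type*}
    [NormedAddCommGroup X] [NormedSpace ℂ X] [CompleteSpace X]
    [NormedAddCommGroup Y] [NormedSpace ℂ Y] [CompleteSpace Y]
    [NormedAddCommGroup G] [NormedSpace ℂ G] [CompleteSpace G]
    (δX : X → G) (hδ : MemHL δX)
    (hdense : Dense (Submodule.span ℂ (δX '' ball (0 : X) 1) : Set G))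
    (linC : (X → ℂ) → (G →L[ℂ] ℂ))
    (hlinC : ∀ g : X → ℂ, MemHL g → ∀ x ∈ ball (0 : X) 1, linC g (δX x) = g x)
    (hlinCnorm : ∀ g : X → ℂ, MemHL g → ‖linC g‖ = LipNorm g)
    (f : X → Y) (hf : MemHL f) :
    IsCompact (closure (LipImage f)) ↔
      IsCompactOperator (fun φ : Y →L[ℂ] ℂ => linC (fun x => φ (f x))) :=
  compactHL_iff_transpose_compact_general δX hdense linC hlinC hlinCnorm f hf
end
end

section
/- Let f ∈ HL₀(B_X, Y). Then f has finite rank, i.e., the linear span of Im_L(f) is finite dimensional, if and only if the linearization T_f ∈ L(G₀(B_X), Y) has finite rank; moreover dim lin(Im_L(f)) = rank(T_f). -/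
/-!
Since `f 0 = 0`, the difference quotients of `f` span the same space as `f(B_X)`, and this is
`T_f` applied to the span of `δ_X(B_X)`. That span is dense in `G`, so the range of `T_f` lies
between `lin f(B_X)` and its closure. If `lin f(B_X)` is finite dimensional it is closed, so the
two coincide; otherwise the range contains an infinite-dimensional subspace as well.
-/

open Metric Set Filter Topology

noncomputable section

universe u

theorem Submodule.finiteDimensional_iff_and_finrank_eq_of_le_of_subset_closure
    {𝕜 F : Type*} [NontriviallyNormedField 𝕜] [CompleteSpace 𝕜]
    [AddCommGroup F] [Module 𝕜 F] [TopologicalSpace F] [IsTopologicalAddGroup F]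
    [ContinuousSMul 𝕜 F] [T2Space F]
    {S R : Submodule 𝕜 F} (hSR : S ≤ R) (hRS : (R : Set F) ⊆ closure S) :
    (FiniteDimensional 𝕜 S ↔ FiniteDimensional 𝕜 R) ∧
      Module.finrank 𝕜 S = Module.finrank 𝕜 R := by
  by_cases hS : FiniteDimensional 𝕜 S
  · obtain rfl : R = S :=
      le_antisymm (fun v hv => S.closed_of_finiteDimensional.closure_subset (hRS hv)) hSR
    exact ⟨Iff.rfl, rfl⟩
  · have hR : ¬ FiniteDimensional 𝕜 R := fun _ => hS (Submodule.finiteDimensional_of_le hSR)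
    exact ⟨iff_of_false hS hR, by
      rw [Module.finrank_of_infinite_dimensional hS, Module.finrank_of_infinite_dimensional hR]⟩

namespace ContinuousLinearMap

variable {R E F : Type*} [Semiring R] [AddCommMonoid E] [Module R E] [TopologicalSpace E]
  [AddCommMonoid F] [Module R F] [TopologicalSpace F]

theorem span_image_le_range (T : E →L[R] F) (s : Set E) :
    Submodule.span R (T '' s) ≤ LinearMap.range (T : E →ₗ[R] F) :=
  Submodule.span_le.2 <| by
    rintro _ ⟨x, -, rfl⟩
    exact ⟨x, rfl⟩

theorem range_subset_closure_span_image_of_dense (T : E →L[R] F) {s : Set E}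
    (hs : Dense (Submodule.span R s : Set E)) :
    (LinearMap.range (T : E →ₗ[R] F) : Set F) ⊆ closure (Submodule.span R (T '' s)) := by
  rintro _ ⟨x, rfl⟩
  have hx : T x ∈ T '' closure (Submodule.span R s : Set E) := ⟨x, hs.closure_eq ▸ trivial, rfl⟩
  have hmap := Submodule.map_span (T : E →ₗ[R] F) s
  rw [← coe_coe, ← hmap]
  exact image_closure_subset_closure_image T.continuous hx

end ContinuousLinearMap

theorem span_lipImage_eq_span_image {X Y : Type*} [NormedAddCommGroup X] [NormedSpace ℂ X]
    [NormedAddCommGroup Y] [NormedSpace ℂ Y] {f : X → Y} (hf0 : f 0 = 0) :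
    Submodule.span ℂ (LipImage f) = Submodule.span ℂ (f '' ball (0 : X) 1) := by
  apply le_antisymm <;> rw [Submodule.span_le]
  · rintro v ⟨x, hx, y, hy, -, rfl⟩
    rw [← Complex.coe_smul]
    exact Submodule.smul_mem _ _ (Submodule.sub_mem _
      (Submodule.subset_span ⟨x, hx, rfl⟩) (Submodule.subset_span ⟨y, hy, rfl⟩))
  · rintro v ⟨x, hx, rfl⟩
    rcases eq_or_ne x 0 with rfl | hx0
    · simp [hf0]
    · have hquot : ‖x - 0‖⁻¹ • (f x - f 0) ∈ LipImage f :=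
        ⟨x, hx, 0, mem_ball_self one_pos, hx0, rfl⟩
      have hfx : f x = (‖x‖ : ℂ) • (‖x - 0‖⁻¹ • (f x - f 0)) := by
        rw [hf0, sub_zero, sub_zero, Complex.coe_smul, smul_smul,
          mul_inv_cancel₀ (norm_ne_zero_iff.2 hx0), one_smul]
      rw [hfx]
      exact Submodule.smul_mem _ _ (Submodule.subset_span hquot)

theorem finiteRankHL_iff_linearization_finiteRank_general {X Y G : Type*}
    [NormedAddCommGroup X] [NormedSpace ℂ X]
    [NormedAddCommGroup Y] [NormedSpace ℂ Y]
    [NormedAddCommGroup G] [NormedSpace ℂ G]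
    (δX : X → G)
    (hdense : Dense (Submodule.span ℂ (δX '' ball (0 : X) 1) : Set G))
    (f : X → Y) (hf : MemHL f)
    (Tf : G →L[ℂ] Y) (hTf : ∀ x ∈ ball (0 : X) 1, Tf (δX x) = f x) :
    (FiniteDimensional ℂ (Submodule.span ℂ (LipImage f)) ↔
      FiniteDimensional ℂ (LinearMap.range (Tf : G →ₗ[ℂ] Y))) ∧
    Module.finrank ℂ (Submodule.span ℂ (LipImage f))
      = Module.finrank ℂ (LinearMap.range (Tf : G →ₗ[ℂ] Y)) := by
  have himage : Tf '' (δX '' ball (0 : X) 1) = f '' ball (0 : X) 1 := by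
    rw [image_image]
    exact image_congr hTf
  rw [span_lipImage_eq_span_image hf.1, ← himage]
  exact Submodule.finiteDimensional_iff_and_finrank_eq_of_le_of_subset_closure
    (Tf.span_image_le_range _) (Tf.range_subset_closure_span_image_of_dense hdense)

/-- f ∈ HL₀(B_X, Y) has finite rank (the linear span of Im_L(f) is
finite dimensional) iff its linearization T_f has finite rank, and the dimension of
lin(Im_L(f)) equals the rank of T_f. -/
theorem finiteRankHL_iff_linearization_finiteRank {X Y G : Type*}
    [NormedAddCommGroup X] [NormedSpace ℂ X] [CompleteSpace X]
    [NormedAddCommGroup Y] [NormedSpace ℂ Y] [CompleteSpace Y]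
    [NormedAddCommGroup G] [NormedSpace ℂ G] [CompleteSpace G]
    (δX : X → G) (hδ : MemHL δX)
    (hdense : Dense (Submodule.span ℂ (δX '' ball (0 : X) 1) : Set G))
    (f : X → Y) (hf : MemHL f)
    (Tf : G →L[ℂ] Y) (hTf : ∀ x ∈ ball (0 : X) 1, Tf (δX x) = f x) :
    (FiniteDimensional ℂ (Submodule.span ℂ (LipImage f)) ↔
      FiniteDimensional ℂ (LinearMap.range (Tf : G →ₗ[ℂ] Y))) ∧
    Module.finrank ℂ (Submodule.span ℂ (LipImage f))
      = Module.finrank ℂ (LinearMap.range (Tf : G →ₗ[ℂ] Y)) :=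
  finiteRankHL_iff_linearization_finiteRank_general δX hdense f hf Tf hTf
end
end
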